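/- arXiv:2407.12147 — 8 statements merged into one kernel-verified Lean document; each statement's English description precedes it below -/
import Mathlib

section
/- In a permutation graph (realized as a point set with the quadrant adjacency), for any two vertices u, v at distance d ≥ 2, there exists a shortest path u = q_0, q_1, ..., q_d = v such that every internal vertex q_1, ..., q_{d-1} lies on the top or bottom boundary, and consecutive internal vertices lie on alternating boundaries. -/
/-!
Take a shortest path `u = g 0, …, g d = v`. Its vertices `g i` and `g (i + 2)` are not
adjacent, so by transitivity of `inTL` consecutive edges point in opposite directions: each
internal vertex lies top-left of both of its path neighbours or bottom-right of both.
Replacing a vertex of the first kind by a top-boundary point of its closed top-left quadrant,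
and one of the second kind by a bottom-boundary point of its closed bottom-right quadrant,
keeps every edge, since `inTL` is monotone in these closed quadrants.
-/

/-- `inTL p q` : point `p` lies in the top-left quadrant of point `q`. -/
def inTL (p q : ℝ × ℝ) : Prop := p.1 < q.1 ∧ q.2 < p.2

/-- The permutation graph of a point set `S`: two points are adjacent iff both belong
to `S` and one lies in the top-left quadrant of the other. -/
def pGraph (S : Finset (ℝ × ℝ)) : SimpleGraph (ℝ × ℝ) where
  Adj p q := p ∈ S ∧ q ∈ S ∧ (inTL p q ∨ inTL q p)
  symm := ⟨by rintro p q ⟨hp, hq, h⟩; exact ⟨hq, hp, h.symm⟩⟩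
  loopless := ⟨by rintro p ⟨-, -, ⟨h, _⟩ | ⟨h, _⟩⟩ <;> exact lt_irrefl _ h⟩

/-- `p` is on the top boundary of `S`: its top-left quadrant contains no point of `S`. -/
def onTop (S : Finset (ℝ × ℝ)) (p : ℝ × ℝ) : Prop := ∀ q ∈ S, ¬ inTL q p

/-- `p` is on the bottom boundary of `S`: its bottom-right quadrant contains no point of `S`. -/
def onBottom (S : Finset (ℝ × ℝ)) (p : ℝ × ℝ) : Prop := ∀ q ∈ S, ¬ inTL p q

/-- All points of `S` have pairwise distinct x-coordinates and pairwise distinct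
y-coordinates. -/
def DistinctCoords (S : Finset (ℝ × ℝ)) : Prop :=
  ∀ p ∈ S, ∀ q ∈ S, p ≠ q → p.1 ≠ q.1 ∧ p.2 ≠ q.2

def inClosedTL (p q : ℝ × ℝ) : Prop := p.1 ≤ q.1 ∧ q.2 ≤ p.2

lemma inClosedTL_refl (p : ℝ × ℝ) : inClosedTL p p := ⟨le_rfl, le_rfl⟩

lemma inTL.trans {p q r : ℝ × ℝ} (h₁ : inTL p q) (h₂ : inTL q r) : inTL p r :=
  ⟨h₁.1.trans h₂.1, h₂.2.trans h₁.2⟩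

lemma inTL.not_inTL {p q : ℝ × ℝ} (h : inTL p q) : ¬ inTL q p :=
  fun h' => (h.1.trans h'.1).false

lemma inTL.mono {p p' q q' : ℝ × ℝ} (hp : inClosedTL p' p) (hq : inClosedTL q q')
    (h : inTL p q) : inTL p' q' :=
  ⟨hp.1.trans_lt (h.1.trans_le hq.1), hq.2.trans_lt (h.2.trans_le hp.2)⟩

section Boundary

variable {S : Finset (ℝ × ℝ)} {p q : ℝ × ℝ}

lemma exists_onTop_inClosedTL (hp : p ∈ S) : ∃ q ∈ S, inClosedTL q p ∧ onTop S q := by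
  classical
  obtain ⟨q, hq, hmin⟩ := (S.filter (inClosedTL · p)).exists_min_image Prod.fst ⟨p, by
    simpa [hp] using inClosedTL_refl p⟩
  rw [Finset.mem_filter] at hq
  refine ⟨q, hq.1, hq.2, fun r hr hrq => (hrq.1.trans_le ?_).false⟩
  exact hmin r (Finset.mem_filter.mpr ⟨hr, hrq.1.le.trans hq.2.1, hq.2.2.trans hrq.2.le⟩)

lemma exists_onBottom_inClosedTL (hp : p ∈ S) : ∃ q ∈ S, inClosedTL p q ∧ onBottom S q := by
  classical
  obtain ⟨q, hq, hmax⟩ := (S.filter (inClosedTL p ·)).exists_max_image Prod.fst ⟨p, by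
    simpa [hp] using inClosedTL_refl p⟩
  rw [Finset.mem_filter] at hq
  refine ⟨q, hq.1, hq.2, fun r hr hqr => (hqr.1.trans_le ?_).false⟩
  exact hmax r (Finset.mem_filter.mpr ⟨hr, hq.2.1.trans hqr.1.le, hqr.2.le.trans hq.2.2⟩)

noncomputable def toTop (S : Finset (ℝ × ℝ)) (p : ℝ × ℝ) : ℝ × ℝ :=
  if hp : p ∈ S then (exists_onTop_inClosedTL hp).choose else p

noncomputable def toBottom (S : Finset (ℝ × ℝ)) (p : ℝ × ℝ) : ℝ × ℝ :=
  if hp : p ∈ S then (exists_onBottom_inClosedTL hp).choose else p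

lemma toTop_spec (hp : p ∈ S) :
    toTop S p ∈ S ∧ inClosedTL (toTop S p) p ∧ onTop S (toTop S p) := by
  rw [toTop, dif_pos hp]
  exact (exists_onTop_inClosedTL hp).choose_spec

lemma toBottom_spec (hp : p ∈ S) :
    toBottom S p ∈ S ∧ inClosedTL p (toBottom S p) ∧ onBottom S (toBottom S p) := by
  rw [toBottom, dif_pos hp]
  exact (exists_onBottom_inClosedTL hp).choose_spec

lemma pGraph_adj_of_inTL (hp : p ∈ S) (hq : q ∈ S) (h : inTL p q) : (pGraph S).Adj p q :=
  ⟨hp, hq, Or.inl h⟩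

lemma not_onBottom_of_inTL (hq : q ∈ S) (h : inTL p q) : ¬ onBottom S p :=
  fun hp => hp q hq h

lemma not_onTop_of_inTL (hp : p ∈ S) (h : inTL p q) : ¬ onTop S q :=
  fun hq => hq p hp h

lemma inTL_zigzag_of_not_adj {a b c : ℝ × ℝ} (hab : (pGraph S).Adj a b)
    (hbc : (pGraph S).Adj b c) (hac : ¬ (pGraph S).Adj a c) :
    (inTL a b → inTL c b) ∧ (inTL b a → inTL b c) := by
  refine ⟨fun h => hbc.2.2.resolve_left fun h' => hac ?_,
    fun h => hbc.2.2.resolve_right fun h' => hac ?_⟩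
  · exact pGraph_adj_of_inTL hab.1 hbc.2.1 (h.trans h')
  · exact (pGraph_adj_of_inTL hbc.2.1 hab.1 (h'.trans h)).symm

end Boundary

lemma SimpleGraph.Walk.not_adj_getVert_add_two {V : Type*} {G : SimpleGraph V} {u v : V}
    {p : G.Walk u v} (hp : p.length = G.dist u v) {i : ℕ} (hi : i + 2 ≤ p.length) :
    ¬ G.Adj (p.getVert i) (p.getVert (i + 2)) := by
  intro h
  have := G.dist_le ((p.take i).append ((p.drop (i + 2)).cons h))
  simp only [length_append, take_length, length_cons, drop_length] at this
  omega

section Lift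

variable {S : Finset (ℝ × ℝ)} {g : ℕ → ℝ × ℝ} {d i : ℕ}

open Classical in
noncomputable def liftToBoundary (S : Finset (ℝ × ℝ)) (g : ℕ → ℝ × ℝ) (d i : ℕ) : ℝ × ℝ :=
  if 0 < i ∧ i < d then
    if inTL (g i) (g (i + 1)) then toTop S (g i) else toBottom S (g i)
  else g i

lemma liftToBoundary_zero : liftToBoundary S g d 0 = g 0 := by
  simp [liftToBoundary]

lemma liftToBoundary_of_le (h : d ≤ i) : liftToBoundary S g d i = g i := by
  simp [liftToBoundary, h.not_gt]

lemma liftToBoundary_of_inTL (h0 : 0 < i) (hi : i < d) (h : inTL (g i) (g (i + 1))) :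
    liftToBoundary S g d i = toTop S (g i) := by
  simp [liftToBoundary, h0, hi, h]

lemma liftToBoundary_of_not_inTL (h0 : 0 < i) (hi : i < d) (h : ¬ inTL (g i) (g (i + 1))) :
    liftToBoundary S g d i = toBottom S (g i) := by
  simp [liftToBoundary, h0, hi, h]

lemma liftToBoundary_spec_of_inTL (hadj : ∀ i < d, (pGraph S).Adj (g i) (g (i + 1)))
    (hfar : ∀ i, i + 2 ≤ d → ¬ (pGraph S).Adj (g i) (g (i + 2)))
    (hi : i < d) (h : inTL (g i) (g (i + 1))) :
    liftToBoundary S g d i ∈ S ∧ liftToBoundary S g d (i + 1) ∈ S ∧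
      inTL (liftToBoundary S g d i) (liftToBoundary S g d (i + 1)) ∧
      (0 < i → onTop S (liftToBoundary S g d i)) ∧
      (i + 1 < d → onBottom S (liftToBoundary S g d (i + 1))) := by
  have hleft : liftToBoundary S g d i ∈ S ∧ inClosedTL (liftToBoundary S g d i) (g i) ∧
      (0 < i → onTop S (liftToBoundary S g d i)) := by
    rcases Nat.eq_zero_or_pos i with rfl | h0
    · rw [liftToBoundary_zero]; exact ⟨(hadj 0 hi).1, inClosedTL_refl _, by simp⟩
    · rw [liftToBoundary_of_inTL h0 hi h]
      obtain ⟨hmem, hle, htop⟩ := toTop_spec (hadj i hi).1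
      exact ⟨hmem, hle, fun _ => htop⟩
  have hright : liftToBoundary S g d (i + 1) ∈ S ∧
      inClosedTL (g (i + 1)) (liftToBoundary S g d (i + 1)) ∧
      (i + 1 < d → onBottom S (liftToBoundary S g d (i + 1))) := by
    by_cases hlast : i + 1 < d
    · have hdown : inTL (g (i + 2)) (g (i + 1)) :=
        (inTL_zigzag_of_not_adj (hadj i hi) (hadj (i + 1) hlast) (hfar i hlast)).1 h
      rw [liftToBoundary_of_not_inTL i.succ_pos hlast hdown.not_inTL]
      obtain ⟨hmem, hle, hbot⟩ := toBottom_spec (hadj i hi).2.1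
      exact ⟨hmem, hle, fun _ => hbot⟩
    · rw [liftToBoundary_of_le (not_lt.mp hlast)]
      exact ⟨(hadj i hi).2.1, inClosedTL_refl _, fun h' => absurd h' hlast⟩
  exact ⟨hleft.1, hright.1, h.mono hleft.2.1 hright.2.1, hleft.2.2, hright.2.2⟩

lemma liftToBoundary_spec_of_inTL_symm (hadj : ∀ i < d, (pGraph S).Adj (g i) (g (i + 1)))
    (hfar : ∀ i, i + 2 ≤ d → ¬ (pGraph S).Adj (g i) (g (i + 2)))
    (hi : i < d) (h : inTL (g (i + 1)) (g i)) :
    liftToBoundary S g d i ∈ S ∧ liftToBoundary S g d (i + 1) ∈ S ∧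
      inTL (liftToBoundary S g d (i + 1)) (liftToBoundary S g d i) ∧
      (0 < i → onBottom S (liftToBoundary S g d i)) ∧
      (i + 1 < d → onTop S (liftToBoundary S g d (i + 1))) := by
  have hleft : liftToBoundary S g d i ∈ S ∧ inClosedTL (g i) (liftToBoundary S g d i) ∧
      (0 < i → onBottom S (liftToBoundary S g d i)) := by
    rcases Nat.eq_zero_or_pos i with rfl | h0
    · rw [liftToBoundary_zero]; exact ⟨(hadj 0 hi).1, inClosedTL_refl _, by simp⟩
    · rw [liftToBoundary_of_not_inTL h0 hi h.not_inTL]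
      obtain ⟨hmem, hle, hbot⟩ := toBottom_spec (hadj i hi).1
      exact ⟨hmem, hle, fun _ => hbot⟩
  have hright : liftToBoundary S g d (i + 1) ∈ S ∧
      inClosedTL (liftToBoundary S g d (i + 1)) (g (i + 1)) ∧
      (i + 1 < d → onTop S (liftToBoundary S g d (i + 1))) := by
    by_cases hlast : i + 1 < d
    · have hup : inTL (g (i + 1)) (g (i + 2)) :=
        (inTL_zigzag_of_not_adj (hadj i hi) (hadj (i + 1) hlast) (hfar i hlast)).2 h
      rw [liftToBoundary_of_inTL i.succ_pos hlast hup]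
      obtain ⟨hmem, hle, htop⟩ := toTop_spec (hadj i hi).2.1
      exact ⟨hmem, hle, fun _ => htop⟩
    · rw [liftToBoundary_of_le (not_lt.mp hlast)]
      exact ⟨(hadj i hi).2.1, inClosedTL_refl _, fun h' => absurd h' hlast⟩
  exact ⟨hleft.1, hright.1, h.mono hright.2.1 hleft.2.1, hleft.2.2, hright.2.2⟩

lemma liftToBoundary_edge (hadj : ∀ i < d, (pGraph S).Adj (g i) (g (i + 1)))
    (hfar : ∀ i, i + 2 ≤ d → ¬ (pGraph S).Adj (g i) (g (i + 2))) (hi : i < d) :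
    (pGraph S).Adj (liftToBoundary S g d i) (liftToBoundary S g d (i + 1)) ∧
      (0 < i → onTop S (liftToBoundary S g d i) ∨ onBottom S (liftToBoundary S g d i)) ∧
      (i + 1 < d →
        (onTop S (liftToBoundary S g d i) → onBottom S (liftToBoundary S g d (i + 1))) ∧
        (onBottom S (liftToBoundary S g d i) → onTop S (liftToBoundary S g d (i + 1)))) := by
  rcases (hadj i hi).2.2 with h | h
  · obtain ⟨hmem, hmem', hTL, htop, hbot⟩ := liftToBoundary_spec_of_inTL hadj hfar hi h
    exact ⟨pGraph_adj_of_inTL hmem hmem' hTL, fun h0 => Or.inl (htop h0),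
      fun hlast => ⟨fun _ => hbot hlast, fun h' => absurd h' (not_onBottom_of_inTL hmem' hTL)⟩⟩
  · obtain ⟨hmem, hmem', hTL, hbot, htop⟩ := liftToBoundary_spec_of_inTL_symm hadj hfar hi h
    exact ⟨(pGraph_adj_of_inTL hmem' hmem hTL).symm, fun h0 => Or.inr (hbot h0),
      fun hlast => ⟨fun h' => absurd h' (not_onTop_of_inTL hmem' hTL), fun _ => htop hlast⟩⟩

theorem exists_alternating_boundary_path (hadj : ∀ i < d, (pGraph S).Adj (g i) (g (i + 1)))
    (hfar : ∀ i, i + 2 ≤ d → ¬ (pGraph S).Adj (g i) (g (i + 2))) :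
    ∃ q : ℕ → ℝ × ℝ, q 0 = g 0 ∧ q d = g d ∧
      (∀ i < d, (pGraph S).Adj (q i) (q (i + 1))) ∧
      (∀ i, 0 < i → i < d → onTop S (q i) ∨ onBottom S (q i)) ∧
      (∀ i, 0 < i → i + 1 < d →
        (onTop S (q i) → onBottom S (q (i + 1))) ∧
        (onBottom S (q i) → onTop S (q (i + 1)))) :=
  ⟨liftToBoundary S g d, liftToBoundary_zero, liftToBoundary_of_le le_rfl,
    fun _ hi => (liftToBoundary_edge hadj hfar hi).1,
    fun _ h0 hi => (liftToBoundary_edge hadj hfar hi).2.1 h0,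
    fun _ _ hi => (liftToBoundary_edge hadj hfar (by omega)).2.2 hi⟩

end Lift

theorem stmt4_general (S : Finset (ℝ × ℝ)) (u v : ℝ × ℝ)
    (d : ℕ) (hd : (pGraph S).dist u v = d) (h2 : 2 ≤ d) :
    ∃ q : ℕ → ℝ × ℝ, q 0 = u ∧ q d = v ∧
      (∀ i < d, (pGraph S).Adj (q i) (q (i + 1))) ∧
      (∀ i, 0 < i → i < d → onTop S (q i) ∨ onBottom S (q i)) ∧
      (∀ i, 0 < i → i + 1 < d →
        (onTop S (q i) → onBottom S (q (i + 1))) ∧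
        (onBottom S (q i) → onTop S (q (i + 1)))) := by
  obtain ⟨p, hp⟩ :=
    SimpleGraph.exists_walk_of_dist_ne_zero (show (pGraph S).dist u v ≠ 0 by omega)
  have hlen : p.length = d := hp.trans hd
  obtain ⟨q, hq0, hqd, hrest⟩ := exists_alternating_boundary_path (S := S) (g := p.getVert)
    (fun i hi => p.adj_getVert_succ (hlen ▸ hi))
    (fun i hi => p.not_adj_getVert_add_two hp (hlen ▸ hi))
  refine ⟨q, hq0.trans p.getVert_zero, hqd.trans ?_, hrest⟩
  rw [← hlen, p.getVert_length]

/-- for any two vertices `u, v` at distance `d ≥ 2` in a permutation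
graph, there is a shortest path `u = q 0, q 1, …, q d = v` whose internal vertices all
lie on the top or bottom boundary, and consecutive internal vertices lie on
alternating boundaries. -/
theorem stmt4 (S : Finset (ℝ × ℝ)) (hS : DistinctCoords S)
    (u v : ℝ × ℝ) (hu : u ∈ S) (hv : v ∈ S)
    (hreach : (pGraph S).Reachable u v)
    (d : ℕ) (hd : (pGraph S).dist u v = d) (h2 : 2 ≤ d) :
    ∃ q : ℕ → ℝ × ℝ, q 0 = u ∧ q d = v ∧
      (∀ i < d, (pGraph S).Adj (q i) (q (i + 1))) ∧
      (∀ i, 0 < i → i < d → onTop S (q i) ∨ onBottom S (q i)) ∧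
      (∀ i, 0 < i → i + 1 < d →
        (onTop S (q i) → onBottom S (q (i + 1))) ∧
        (onBottom S (q i) → onTop S (q (i + 1)))) :=
  stmt4_general S u v d hd h2
end

section
/- With layers defined as distances from the leftmost point p_0, for any two boundary points u, v with L(u) ≤ L(v), the distance d(u,v) equals either L(v) − L(u) or L(v) − L(u) + 2. -/
/-!
Write `L w` for the distance from `p₀` to `w`. The layers are cut out by a staircase: `stair 0`
is `p₀.1`, and `stair (n + 1)` is the largest value of the other coordinate (`y` after `x`, `x`
after `y`) over `p₀` and the points whose `n`-th coordinate lies below `stair n`. The ball of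
radius `n` around `p₀` consists of `p₀` and the points lying below one of the first `n + 1` steps.
Hence the point realising `stair (n + 1)` is adjacent to the whole layer `n + 1`, and every edge
between two layers joins a point of even layer to a point of odd layer lying to its bottom-right.

The lower bound `L v - L u ≤ d(u, v)` is the triangle inequality. For the upper bound, let `w` be
the point of layer `L u` on a geodesic from `p₀` to `v`; going from `u` to `w` through the vertex
adjacent to their whole layer costs 2. A path of length `L v - L u + 1` climbs one layer per edge
except for one edge `xy` inside a layer. Call the top-left of a point of even layer, and the
bottom-right of a point of odd layer, its outer side (`Outer`): neighbours in other layers are on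
the inner side, and boundary points have nothing on their outer side. If `y` is outer to `x`, the
predecessor of `x` is inner to `x`, hence adjacent to `y`, which shortens the path; if `x = u`,
the boundary condition fails. The case where `x` is outer to `y` is symmetric, with `v`.
-/

namespace SimpleGraph

variable {V : Type*} {G : SimpleGraph V} {a b : V}

lemma Reachable.exists_adj_dist_lt (h : G.Reachable a b) (hne : a ≠ b) :
    ∃ z, G.Adj z b ∧ G.dist a z < G.dist a b := by
  obtain ⟨W, hW⟩ := h.exists_walk_length_eq_dist
  have hnil : ¬W.Nil := fun hn => hne hn.eq
  refine ⟨W.penultimate, W.adj_penultimate hnil, ?_⟩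
  have hlen := Walk.not_nil_iff_lt_length.1 hnil
  have := dist_le W.dropLast
  rw [Walk.length_dropLast] at this
  omega

lemma Reachable.exists_dist_eq_of_le (h : G.Reachable a b) {n : ℕ} (hn : n ≤ G.dist a b) :
    ∃ w, G.dist a w = n ∧ G.dist w b = G.dist a b - n := by
  obtain ⟨W, hW⟩ := h.exists_walk_length_eq_dist
  have hfirst := dist_le (W.take n)
  have hlast := dist_le (W.drop n)
  have htri := Reachable.dist_triangle_right ⟨W.drop n⟩ a
  rw [Walk.take_length] at hfirst
  rw [Walk.drop_length] at hlast
  exact ⟨W.getVert n, by omega, by omega⟩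

lemma Walk.exists_adj_eq_or_length_mod_two (f : V → ℕ) (hf : ∀ x y, G.Adj x y → f y ≤ f x + 1)
    (W : G.Walk a b) :
    (∃ x y, G.Adj x y ∧ f x = f y ∧
      ∃ (W₁ : G.Walk a x) (W₂ : G.Walk y b), W₁.length + 1 + W₂.length = W.length) ∨
    (f a + W.length) % 2 = f b % 2 := by
  induction W with
  | nil => simp
  | @cons a c b h W ih =>
    rcases ih with ⟨x, y, hxy, hfxy, W₁, W₂, hlen⟩ | hpar
    · exact .inl ⟨x, y, hxy, hfxy, .cons h W₁, W₂, by simp only [length_cons]; omega⟩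
    by_cases hflat : f a = f c
    · exact .inl ⟨a, c, h, hflat, .nil, W, by simp only [length_nil, length_cons]; omega⟩
    · have := hf a c h
      have := hf c a h.symm
      right
      rw [length_cons]
      omega

end SimpleGraph

lemma inTL_trans {p q r : ℝ × ℝ} (hpq : inTL p q) (hqr : inTL q r) : inTL p r :=
  ⟨hpq.1.trans hqr.1, hqr.2.trans hpq.2⟩

namespace pGraph

variable {S : Finset (ℝ × ℝ)} {p₀ : ℝ × ℝ}

lemma mem_of_dist_ne_zero {p w : ℝ × ℝ} (h : (pGraph S).dist p w ≠ 0) : w ∈ S := by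
  obtain ⟨W, hW⟩ := SimpleGraph.exists_walk_of_dist_ne_zero h
  exact (W.adj_penultimate (W.not_nil_iff_lt_length.2 (by omega))).2.1

def stairCoord (n : ℕ) (p : ℝ × ℝ) : ℝ := if Even n then p.1 else p.2

lemma stairCoord_lt_or_lt_of_adj {a b : ℝ × ℝ} (hab : (pGraph S).Adj a b) (n : ℕ) :
    stairCoord n b < stairCoord n a ∨ stairCoord (n + 1) b < stairCoord (n + 1) a := by
  obtain ⟨-, -, h | h⟩ := hab <;> by_cases hn : Even n <;>
    simp [stairCoord, hn, Nat.even_add_one, inTL] at h ⊢ <;> simp [h]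

lemma adj_of_stairCoord_lt {a b : ℝ × ℝ} (ha : a ∈ S) (hb : b ∈ S) {n : ℕ}
    (h : stairCoord n a < stairCoord n b) (h' : stairCoord (n + 1) b < stairCoord (n + 1) a) :
    (pGraph S).Adj a b := by
  refine ⟨ha, hb, ?_⟩
  by_cases hn : Even n <;> simp only [stairCoord, hn, Nat.even_add_one] at h h' <;>
    simp_all [inTL]

variable (S p₀) in
noncomputable def nextStair (n : ℕ) (t : ℝ) : ℝ :=
  ((insert p₀ (S.filter fun q => stairCoord n q < t)).image (stairCoord (n + 1))).max' (by simp)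

variable (S p₀) in
noncomputable def stair : ℕ → ℝ
  | 0 => p₀.1
  | n + 1 => nextStair S p₀ n (stair n)

variable (S p₀) in
def BelowStair (n : ℕ) (w : ℝ × ℝ) : Prop := stairCoord n w < stair S p₀ n

lemma stairCoord_succ_le_nextStair {n : ℕ} {t : ℝ} {q : ℝ × ℝ}
    (hq : q = p₀ ∨ q ∈ S ∧ stairCoord n q < t) : stairCoord (n + 1) q ≤ nextStair S p₀ n t :=
  Finset.le_max' _ _ (Finset.mem_image_of_mem _ (by simpa using hq))

lemma exists_stairCoord_succ_eq_nextStair (n : ℕ) (t : ℝ) :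
    ∃ q, (q = p₀ ∨ q ∈ S ∧ stairCoord n q < t) ∧ stairCoord (n + 1) q = nextStair S p₀ n t := by
  have hmem := Finset.max'_mem
    ((insert p₀ (S.filter fun q => stairCoord n q < t)).image (stairCoord (n + 1))) (by simp)
  obtain ⟨q, hq, hqeq⟩ := Finset.mem_image.1 hmem
  exact ⟨q, by simpa using hq, hqeq⟩

lemma belowStair_or_belowStair_succ_of_adj {n : ℕ} {a b : ℝ × ℝ} (ha : BelowStair S p₀ n a)
    (hab : (pGraph S).Adj a b) : BelowStair S p₀ n b ∨ BelowStair S p₀ (n + 1) b := by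
  rcases stairCoord_lt_or_lt_of_adj hab n with h | h
  · exact .inl (h.trans ha)
  · exact .inr (h.trans_le (stairCoord_succ_le_nextStair (.inr ⟨hab.1, ha⟩)))

def Outer (t : ℕ) (p q : ℝ × ℝ) : Prop := if Even t then inTL q p else inTL p q

lemma Outer.trans {t : ℕ} {p q r : ℝ × ℝ} (hpq : Outer t p q) (hqr : Outer t q r) :
    Outer t p r := by
  by_cases ht : Even t <;> simp only [Outer, ht, if_true, if_false] at hpq hqr ⊢
  exacts [inTL_trans hqr hpq, inTL_trans hpq hqr]

lemma Outer.adj {t : ℕ} {p q : ℝ × ℝ} (hp : p ∈ S) (hq : q ∈ S) (h : Outer t p q) :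
    (pGraph S).Adj p q := by
  by_cases ht : Even t <;> simp only [Outer, ht, if_true, if_false] at h
  exacts [⟨hp, hq, .inr h⟩, ⟨hp, hq, .inl h⟩]

lemma outer_or_outer_of_adj {p q : ℝ × ℝ} (h : (pGraph S).Adj p q) (t : ℕ) :
    Outer t p q ∨ Outer t q p := by
  obtain ⟨-, -, h | h⟩ := h <;> by_cases ht : Even t <;> simp [Outer, ht, h]

lemma outer_succ_iff {t : ℕ} {p q : ℝ × ℝ} : Outer (t + 1) p q ↔ Outer t q p := by
  by_cases ht : Even t <;> simp [Outer, ht, Nat.even_add_one]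

lemma outer_of_adj_of_stairCoord_lt {n : ℕ} {a b : ℝ × ℝ} (hab : (pGraph S).Adj a b)
    (h : stairCoord n a < stairCoord n b) : Outer n b a := by
  obtain ⟨-, -, hab | hab⟩ := hab <;> by_cases hn : Even n <;>
    simp only [Outer, stairCoord, hn, if_true, if_false, inTL] at h hab ⊢ <;>
    first | exact hab | exact absurd h (not_lt.2 hab.1.le) | exact absurd h (not_lt.2 hab.2.le)

section Layers

variable (hleft : ∀ q ∈ S, q ≠ p₀ → p₀.1 < q.1) (hp₀ : p₀ ∈ S)
  (hconn : ∀ p ∈ S, ∀ q ∈ S, (pGraph S).Reachable p q)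
include hleft

lemma not_belowStair_zero {w : ℝ × ℝ} (hw : w ∈ S) : ¬BelowStair S p₀ 0 w := by
  intro h
  have hne : w ≠ p₀ := by rintro rfl; exact lt_irrefl _ h
  exact (hleft w hw hne).not_gt h

include hp₀ in
lemma adj_p₀_of_stairCoord_lt {w : ℝ × ℝ} (hw : w ∈ S) {n : ℕ}
    (h : stairCoord n w < stairCoord n p₀) : (pGraph S).Adj p₀ w := by
  have hne : w ≠ p₀ := by rintro rfl; exact lt_irrefl _ h
  have hx := hleft w hw hne
  by_cases hn : Even n <;> simp only [stairCoord, hn, if_true, if_false] at h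
  · exact absurd h hx.not_gt
  · exact ⟨hp₀, hw, .inl ⟨hx, h⟩⟩

lemma belowStair_one_of_adj {b : ℝ × ℝ} (h : (pGraph S).Adj p₀ b) : BelowStair S p₀ 1 b := by
  rcases stairCoord_lt_or_lt_of_adj h 0 with h0 | h1
  · exact absurd h0 (not_belowStair_zero hleft h.2.1)
  · exact h1.trans_le (stairCoord_succ_le_nextStair (.inl rfl))

lemma exists_belowStair_of_walk {a w : ℝ × ℝ} (W : (pGraph S).Walk a w) (k : ℕ)
    (ha : a = p₀ ∨ ∃ m ≤ k, BelowStair S p₀ m a) :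
    w = p₀ ∨ ∃ m ≤ k + W.length, BelowStair S p₀ m w := by
  induction W generalizing k with
  | nil => simpa using ha
  | @cons a b w h W ih =>
    have hb : ∃ m ≤ k + 1, BelowStair S p₀ m b := by
      rcases ha with rfl | ⟨m, hm, ha⟩
      · exact ⟨1, by omega, belowStair_one_of_adj hleft h⟩
      · rcases belowStair_or_belowStair_succ_of_adj ha h with hb | hb
        exacts [⟨m, by omega, hb⟩, ⟨m + 1, by omega, hb⟩]
    refine (ih (k + 1) (.inr hb)).imp_right fun ⟨m, hm, hw⟩ => ⟨m, ?_, hw⟩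
    rw [SimpleGraph.Walk.length_cons]
    omega

include hp₀ in
lemma dist_le_of_belowStair (n : ℕ) {w : ℝ × ℝ} (hw : w ∈ S) (h : BelowStair S p₀ n w) :
    (pGraph S).dist p₀ w ≤ n := by
  induction n generalizing w with
  | zero => exact absurd h (not_belowStair_zero hleft hw)
  | succ n ih =>
    by_cases hwn : BelowStair S p₀ n w
    · exact (ih hw hwn).trans n.le_succ
    obtain ⟨t, ht, hteq⟩ := exists_stairCoord_succ_eq_nextStair (S := S) (p₀ := p₀) n (stair S p₀ n)
    have hwt : stairCoord (n + 1) w < stairCoord (n + 1) t := h.trans_eq hteq.symm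
    rcases ht with ht | ⟨htS, htn⟩
    · rw [ht] at hwt
      have := SimpleGraph.dist_eq_one_iff_adj.2 (adj_p₀_of_stairCoord_lt hleft hp₀ hw hwt)
      omega
    · have hadj := adj_of_stairCoord_lt htS hw (htn.trans_le (not_lt.1 hwn)) hwt
      have htri := hadj.reachable.dist_triangle_right p₀
      rw [SimpleGraph.dist_eq_one_iff_adj.2 hadj] at htri
      have := ih htS htn
      omega

include hp₀ hconn

lemma dist_le_iff_belowStair {w : ℝ × ℝ} (hw : w ∈ S) {n : ℕ} :
    (pGraph S).dist p₀ w ≤ n ↔ w = p₀ ∨ ∃ m ≤ n, BelowStair S p₀ m w := by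
  constructor
  · intro hn
    obtain ⟨W, hW⟩ := (hconn p₀ hp₀ w hw).exists_walk_length_eq_dist
    refine (exists_belowStair_of_walk hleft W 0 (.inl rfl)).imp_right fun ⟨m, hm, h⟩ => ⟨m, ?_, h⟩
    omega
  · rintro (rfl | ⟨m, hm, h⟩)
    · simp
    · exact (dist_le_of_belowStair hleft hp₀ m hw h).trans hm

lemma belowStair_of_dist_eq_succ {w : ℝ × ℝ} {n : ℕ} (h : (pGraph S).dist p₀ w = n + 1) :
    BelowStair S p₀ (n + 1) w ∧ ¬BelowStair S p₀ n w := by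
  have hw : w ∈ S := mem_of_dist_ne_zero (p := p₀) (by omega)
  have hnot : ∀ m ≤ n, ¬BelowStair S p₀ m w := fun m hm hbelow => by
    have := (dist_le_iff_belowStair hleft hp₀ hconn hw).2 (.inr ⟨m, hm, hbelow⟩)
    omega
  rcases (dist_le_iff_belowStair hleft hp₀ hconn hw).1 h.le with rfl | ⟨m, hm, hbelow⟩
  · simp at h
  · obtain rfl : m = n + 1 := by
      by_contra hne
      exact hnot m (by omega) hbelow
    exact ⟨hbelow, hnot n le_rfl⟩

lemma exists_adj_of_dist_eq_succ (n : ℕ) :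
    ∃ m ∈ S, ∀ w, (pGraph S).dist p₀ w = n + 1 → (pGraph S).Adj m w := by
  obtain ⟨t, ht, hteq⟩ := exists_stairCoord_succ_eq_nextStair (S := S) (p₀ := p₀) n (stair S p₀ n)
  have hlayer := fun w (hw : (pGraph S).dist p₀ w = n + 1) =>
    belowStair_of_dist_eq_succ hleft hp₀ hconn hw
  have hmem := fun w (hw : (pGraph S).dist p₀ w = n + 1) =>
    mem_of_dist_ne_zero (S := S) (p := p₀) (w := w) (by omega)
  rcases ht with ht | ⟨htS, htn⟩
  · rw [ht] at hteq
    exact ⟨p₀, hp₀, fun w hw =>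
      adj_p₀_of_stairCoord_lt hleft hp₀ (hmem w hw) ((hlayer w hw).1.trans_eq hteq.symm)⟩
  · exact ⟨t, htS, fun w hw => adj_of_stairCoord_lt htS (hmem w hw)
      (htn.trans_le (not_lt.1 (hlayer w hw).2)) ((hlayer w hw).1.trans_eq hteq.symm)⟩

lemma outer_of_adj_of_dist_eq_succ {a b : ℝ × ℝ} (hab : (pGraph S).Adj a b)
    (h : (pGraph S).dist p₀ b = (pGraph S).dist p₀ a + 1) : Outer ((pGraph S).dist p₀ a) b a := by
  apply outer_of_adj_of_stairCoord_lt hab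
  rcases ha : (pGraph S).dist p₀ a with _ | n
  · have ha₀ : p₀ = a := ((hconn p₀ hp₀ a hab.1).dist_eq_zero_iff).1 ha
    have hb₀ : b ≠ p₀ := by rintro rfl; simp at h
    simpa [stairCoord, ← ha₀] using hleft b hab.2.1 hb₀
  · rw [ha] at h
    exact (belowStair_of_dist_eq_succ hleft hp₀ hconn ha).1.trans_le
      (not_lt.1 (belowStair_of_dist_eq_succ hleft hp₀ hconn h).2)

lemma outer_of_adj_of_dist_ne {z w : ℝ × ℝ} (hzw : (pGraph S).Adj z w)
    (hne : (pGraph S).dist p₀ z ≠ (pGraph S).dist p₀ w) : Outer ((pGraph S).dist p₀ w) z w := by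
  rcases hzw.diff_dist_adj (u := p₀) with h | h | h
  · exact absurd h.symm hne
  · rw [h, outer_succ_iff]
    exact outer_of_adj_of_dist_eq_succ hleft hp₀ hconn hzw h
  · exact outer_of_adj_of_dist_eq_succ hleft hp₀ hconn hzw.symm (by omega)

lemma not_outer_of_boundary {w q : ℝ × ℝ} (hw : w ∈ S) (hwb : onTop S w ∨ onBottom S w)
    (hq : q ∈ S) : ¬Outer ((pGraph S).dist p₀ w) w q := by
  intro hout
  by_cases hw₀ : w = p₀
  · rw [hw₀, SimpleGraph.dist_self] at hout
    simp only [Outer, Even.zero, if_true] at hout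
    exact (hleft q hq (by rintro rfl; exact lt_irrefl _ hout.1)).not_gt hout.1
  obtain ⟨z, hzw, hz⟩ := (hconn p₀ hp₀ w hw).exists_adj_dist_lt (Ne.symm hw₀)
  have hin := outer_of_adj_of_dist_ne hleft hp₀ hconn hzw hz.ne
  by_cases ht : Even ((pGraph S).dist p₀ w) <;>
    simp only [Outer, ht, if_true, if_false] at hin hout <;> rcases hwb with htop | hbot
  exacts [htop q hq hout, hbot z hzw.1 hin, htop z hzw.1 hin, hbot q hq hout]

lemma dist_le_of_outer {a x y : ℝ × ℝ} (ha : a ∈ S) (hab : onTop S a ∨ onBottom S a)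
    (hx : x ∈ S) (hy : y ∈ S) (hxy : Outer ((pGraph S).dist p₀ x) x y)
    (hgeo : (pGraph S).dist p₀ a + (pGraph S).dist a x = (pGraph S).dist p₀ x ∨
      (pGraph S).dist p₀ x + (pGraph S).dist a x = (pGraph S).dist p₀ a) :
    (pGraph S).dist a y ≤ (pGraph S).dist a x := by
  by_cases hax : a = x
  · subst hax
    exact absurd hxy (not_outer_of_boundary hleft hp₀ hconn ha hab hy)
  obtain ⟨z, hzx, hz⟩ := (hconn a ha x hx).exists_adj_dist_lt hax
  have hza := (hconn a ha z hzx.1).dist_triangle_right p₀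
  have haz := (hconn z hzx.1 a ha).dist_triangle_right p₀
  rw [SimpleGraph.dist_comm (u := z)] at haz
  have hzy : (pGraph S).Adj z y :=
    ((outer_of_adj_of_dist_ne hleft hp₀ hconn hzx (by omega)).trans hxy).adj hzx.1 hy
  have hay := hzy.reachable.dist_triangle_right a
  rw [SimpleGraph.dist_eq_one_iff_adj.2 hzy] at hay
  omega

lemma dist_ne_sub_add_one {u v : ℝ × ℝ} (hu : u ∈ S) (hv : v ∈ S)
    (hub : onTop S u ∨ onBottom S u) (hvb : onTop S v ∨ onBottom S v)
    (huv : (pGraph S).dist p₀ u ≤ (pGraph S).dist p₀ v) :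
    (pGraph S).dist u v ≠ (pGraph S).dist p₀ v - (pGraph S).dist p₀ u + 1 := by
  intro hd
  obtain ⟨W, hW⟩ := (hconn u hu v hv).exists_walk_length_eq_dist
  have hlip (x y : ℝ × ℝ) (h : (pGraph S).Adj x y) :
      (pGraph S).dist p₀ y ≤ (pGraph S).dist p₀ x + 1 := by
    simpa [SimpleGraph.dist_eq_one_iff_adj.2 h] using h.reachable.dist_triangle_right p₀
  rcases W.exists_adj_eq_or_length_mod_two _ hlip with ⟨x, y, hxy, hflat, W₁, W₂, hlen⟩ | hpar
  swap
  · omega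
  have hx := hxy.1
  have hy := hxy.2.1
  have hux := SimpleGraph.dist_le W₁
  have hyv := SimpleGraph.dist_le W₂
  have hlx := (hconn u hu x hx).dist_triangle_right p₀
  have hlv := (hconn y hy v hv).dist_triangle_right p₀
  rcases outer_or_outer_of_adj hxy ((pGraph S).dist p₀ x) with hout | hout
  · have huy := dist_le_of_outer hleft hp₀ hconn hu hub hx hy hout (.inl (by omega))
    have := (hconn y hy v hv).dist_triangle_right u
    omega
  · rw [hflat] at hout
    have hvx := dist_le_of_outer hleft hp₀ hconn hv hvb hy hx hout
      (.inr (by rw [SimpleGraph.dist_comm (u := v)]; omega))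
    have := (hconn x hx v hv).dist_triangle_right u
    rw [SimpleGraph.dist_comm (u := x)] at this
    rw [SimpleGraph.dist_comm (u := v) (v := y)] at hvx
    omega

lemma dist_le_sub_add_two {u v : ℝ × ℝ} (hu : u ∈ S) (hv : v ∈ S)
    (huv : (pGraph S).dist p₀ u ≤ (pGraph S).dist p₀ v) :
    (pGraph S).dist u v ≤ (pGraph S).dist p₀ v - (pGraph S).dist p₀ u + 2 := by
  rcases hn : (pGraph S).dist p₀ u with _ | n
  · obtain rfl : p₀ = u := ((hconn p₀ hp₀ u hu).dist_eq_zero_iff).1 hn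
    omega
  obtain ⟨w, hw, hwv⟩ := (hconn p₀ hp₀ v hv).exists_dist_eq_of_le huv
  obtain ⟨m, hm, hmadj⟩ := exists_adj_of_dist_eq_succ hleft hp₀ hconn n
  have hmu := hmadj u hn
  have hmw := hmadj w (hw.trans hn)
  have huv' := (hconn m hm v hv).dist_triangle_right u
  have hmv := (hconn w hmw.2.1 v hv).dist_triangle_right m
  rw [SimpleGraph.dist_eq_one_iff_adj.2 hmu.symm] at huv'
  rw [SimpleGraph.dist_eq_one_iff_adj.2 hmw] at hmv
  omega

end Layers

end pGraph

theorem stmt7_general (S : Finset (ℝ × ℝ))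
    (hconn : ∀ p ∈ S, ∀ q ∈ S, (pGraph S).Reachable p q)
    (p₀ : ℝ × ℝ) (hp₀ : p₀ ∈ S) (hleft : ∀ q ∈ S, q ≠ p₀ → p₀.1 < q.1)
    (L : ℝ × ℝ → ℕ) (hL : ∀ w, L w = (pGraph S).dist p₀ w)
    (u v : ℝ × ℝ) (hu : u ∈ S) (hv : v ∈ S)
    (hub : onTop S u ∨ onBottom S u) (hvb : onTop S v ∨ onBottom S v)
    (hLuv : L u ≤ L v) :
    (pGraph S).dist u v = L v - L u ∨ (pGraph S).dist u v = L v - L u + 2 := by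
  rw [hL, hL] at hLuv ⊢
  have hlower := (hconn u hu v hv).dist_triangle_right p₀
  have hupper := pGraph.dist_le_sub_add_two hleft hp₀ hconn hu hv hLuv
  have hmid := pGraph.dist_ne_sub_add_one hleft hp₀ hconn hu hv hub hvb hLuv
  omega

/-- with layers `L w = dist p₀ w` defined by distances from the leftmost
point `p₀`, any two boundary points `u, v` with `L u ≤ L v` satisfy
`d(u,v) = L v − L u` or `d(u,v) = L v − L u + 2`. -/
theorem stmt7 (S : Finset (ℝ × ℝ)) (hS : DistinctCoords S)
    (hconn : ∀ p ∈ S, ∀ q ∈ S, (pGraph S).Reachable p q)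
    (p₀ : ℝ × ℝ) (hp₀ : p₀ ∈ S) (hleft : ∀ q ∈ S, q ≠ p₀ → p₀.1 < q.1)
    (L : ℝ × ℝ → ℕ) (hL : ∀ w, L w = (pGraph S).dist p₀ w)
    (u v : ℝ × ℝ) (hu : u ∈ S) (hv : v ∈ S)
    (hub : onTop S u ∨ onBottom S u) (hvb : onTop S v ∨ onBottom S v)
    (hLuv : L u ≤ L v) :
    (pGraph S).dist u v = L v - L u ∨ (pGraph S).dist u v = L v - L u + 2 :=
  stmt7_general S hconn p₀ hp₀ hleft L hL u v hu hv hub hvb hLuv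
end

section
/- With layers defined by distance from the leftmost point, the set of boundary points in each layer k ≥ 1 forms a set of consecutive points in the boundary order of the corresponding boundary (layer 2k is a contiguous interval of the ordered top-boundary points, layer 2k+1 a contiguous interval of the ordered bottom-boundary points). -/
/-!
Along a boundary, x- and y-order agree, so it suffices that the distance `d` from the leftmost
point `p₀` is monotone under strict dominance `a < b` (in both coordinates). A walk from a point
dominated by `a` to a point dominating `a` cannot jump over `a`: its first vertex leaving the
lower-left quadrant of `a` is `a` itself or a neighbour of `a`, so `d a ≤ d b` whenever `p₀`
lies below `a`. If `p₀` lies above `a`, then `p₀` and `a` are adjacent and `d a = 1 ≤ d b`.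
-/

open SimpleGraph

variable {S : Finset (ℝ × ℝ)}

lemma eq_or_adj_or_lt_or_gt (hS : DistinctCoords S) {x y : ℝ × ℝ} (hx : x ∈ S) (hy : y ∈ S) :
    x = y ∨ (pGraph S).Adj x y ∨ (x.1 < y.1 ∧ x.2 < y.2) ∨ (y.1 < x.1 ∧ y.2 < x.2) := by
  by_cases h : x = y
  · exact Or.inl h
  obtain ⟨h1, h2⟩ := hS x hx y hy h
  rcases h1.lt_or_gt with h1 | h1 <;> rcases h2.lt_or_gt with h2 | h2
  · exact Or.inr (Or.inr (Or.inl ⟨h1, h2⟩))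
  · exact Or.inr (Or.inl ⟨hx, hy, Or.inl ⟨h1, h2⟩⟩)
  · exact Or.inr (Or.inl ⟨hx, hy, Or.inr ⟨h1, h2⟩⟩)
  · exact Or.inr (Or.inr (Or.inr ⟨h1, h2⟩))

lemma not_adj_of_lt {x y : ℝ × ℝ} (h1 : x.1 < y.1) (h2 : x.2 < y.2) : ¬ (pGraph S).Adj x y := by
  rintro ⟨-, -, ⟨h1', h2'⟩ | ⟨h1', h2'⟩⟩ <;> linarith

lemma snd_lt_snd_of_not_inTL (hS : DistinctCoords S) {p q : ℝ × ℝ} (hp : p ∈ S) (hq : q ∈ S)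
    (h1 : p.1 < q.1) (h : ¬ inTL p q) : p.2 < q.2 := by
  refine ((hS p hp q hq ?_).2.lt_or_gt).resolve_right fun h2 => h ⟨h1, h2⟩
  rintro rfl
  exact lt_irrefl _ h1

lemma exists_walk_length_le_of_lt (hS : DistinctCoords S) {a : ℝ × ℝ} (ha : a ∈ S) :
    ∀ {x b : ℝ × ℝ} (W : (pGraph S).Walk x b), x.1 < a.1 → x.2 < a.2 → a.1 < b.1 → a.2 < b.2 →
      ∃ P : (pGraph S).Walk x a, P.length ≤ W.length := by
  intro x b W
  induction W with
  | nil => intro h1 _ h3 _; exact absurd (h1.trans h3) (lt_irrefl _)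
  | @cons x y b hxy W ih =>
    intro h1 h2 h3 h4
    rcases eq_or_adj_or_lt_or_gt hS hxy.2.1 ha with rfl | hya | ⟨hy1, hy2⟩ | ⟨hy1, hy2⟩
    · exact ⟨.cons hxy .nil, by simp⟩
    · have hyb : y ≠ b := by
        rintro rfl
        exact not_adj_of_lt h3 h4 hya.symm
      have hW : 1 ≤ W.length := Nat.one_le_iff_ne_zero.2 fun h => hyb (W.eq_of_length_eq_zero h)
      exact ⟨.cons hxy (.cons hya .nil), by simp only [Walk.length_cons, Walk.length_nil]; omega⟩
    · obtain ⟨P, hP⟩ := ih hy1 hy2 h3 h4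
      exact ⟨.cons hxy P, by simpa using hP⟩
    · exact absurd hxy (not_adj_of_lt (h1.trans hy1) (h2.trans hy2))

lemma dist_le_dist_of_lt (hS : DistinctCoords S) {p₀ a b : ℝ × ℝ} (ha : a ∈ S)
    (hb : (pGraph S).Reachable p₀ b) (h1 : p₀.1 < a.1) (h2 : p₀.2 < a.2)
    (h3 : a.1 < b.1) (h4 : a.2 < b.2) :
    (pGraph S).dist p₀ a ≤ (pGraph S).dist p₀ b := by
  obtain ⟨W, hW⟩ := hb.exists_walk_length_eq_dist
  obtain ⟨P, hP⟩ := exists_walk_length_le_of_lt hS ha W h1 h2 h3 h4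
  exact (dist_le P).trans (hP.trans hW.le)

lemma dist_le_dist_of_lt_of_leftmost (hS : DistinctCoords S) {p₀ a b : ℝ × ℝ} (hp₀ : p₀ ∈ S)
    (hleft : ∀ q ∈ S, q ≠ p₀ → p₀.1 < q.1) (ha : a ∈ S) (hb : (pGraph S).Reachable p₀ b)
    (h1 : a.1 < b.1) (h2 : a.2 < b.2) :
    (pGraph S).dist p₀ a ≤ (pGraph S).dist p₀ b := by
  by_cases hap : a = p₀
  · simp [hap]
  have ha1 : p₀.1 < a.1 := hleft a ha hap
  rcases (hS p₀ hp₀ a ha (Ne.symm hap)).2.lt_or_gt with ha2 | ha2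
  · exact dist_le_dist_of_lt hS ha hb ha1 ha2 h1 h2
  · have hadj : (pGraph S).Adj p₀ a := ⟨hp₀, ha, Or.inl ⟨ha1, ha2⟩⟩
    have hbp : p₀ ≠ b := by rintro rfl; linarith
    rw [dist_eq_one_iff_adj.2 hadj]
    exact hb.pos_dist_of_ne hbp

theorem stmt8_general (S : Finset (ℝ × ℝ)) (hS : DistinctCoords S)
    (hconn : ∀ p ∈ S, ∀ q ∈ S, (pGraph S).Reachable p q)
    (p₀ : ℝ × ℝ) (hp₀ : p₀ ∈ S) (hleft : ∀ q ∈ S, q ≠ p₀ → p₀.1 < q.1)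
    (L : ℝ × ℝ → ℕ) (hL : ∀ w, L w = (pGraph S).dist p₀ w)
    (u w v : ℝ × ℝ) (hu : u ∈ S) (hw : w ∈ S) (hv : v ∈ S)
    (hbnd : (onTop S u ∧ onTop S w ∧ onTop S v) ∨
            (onBottom S u ∧ onBottom S w ∧ onBottom S v))
    (hx1 : u.1 < w.1) (hx2 : w.1 < v.1)
    (hlay : L u = L v) :
    L w = L u := by
  have hnot : ¬ inTL u w ∧ ¬ inTL w v := by
    rcases hbnd with ⟨-, hTw, hTv⟩ | ⟨hBu, hBw, -⟩
    · exact ⟨hTw u hu, hTv w hw⟩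
    · exact ⟨hBu w hw, hBw v hv⟩
  have hy1 := snd_lt_snd_of_not_inTL hS hu hw hx1 hnot.1
  have hy2 := snd_lt_snd_of_not_inTL hS hw hv hx2 hnot.2
  have huw := dist_le_dist_of_lt_of_leftmost hS hp₀ hleft hu (hconn p₀ hp₀ w hw) hx1 hy1
  have hwv := dist_le_dist_of_lt_of_leftmost hS hp₀ hleft hw (hconn p₀ hp₀ v hv) hx2 hy2
  simp only [hL] at hlay ⊢
  omega

/-- each layer (distance class from the leftmost point `p₀`) is a
contiguous interval of the corresponding boundary in boundary order: if `u, w, v` lie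
on the same boundary with `u.1 < w.1 < v.1` and `u, v` are in the same layer, then so
is `w`. -/
theorem stmt8 (S : Finset (ℝ × ℝ)) (hS : DistinctCoords S)
    (hconn : ∀ p ∈ S, ∀ q ∈ S, (pGraph S).Reachable p q)
    (p₀ : ℝ × ℝ) (hp₀ : p₀ ∈ S) (hleft : ∀ q ∈ S, q ≠ p₀ → p₀.1 < q.1)
    (L : ℝ × ℝ → ℕ) (hL : ∀ w, L w = (pGraph S).dist p₀ w)
    (u w v : ℝ × ℝ) (hu : u ∈ S) (hw : w ∈ S) (hv : v ∈ S)
    (hbnd : (onTop S u ∧ onTop S w ∧ onTop S v) ∨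
            (onBottom S u ∧ onBottom S w ∧ onBottom S v))
    (hx1 : u.1 < w.1) (hx2 : w.1 < v.1)
    (hlay : L u = L v) (hk : 1 ≤ L u) :
    L w = L u :=
  stmt8_general S hS hconn p₀ hp₀ hleft L hL u w v hu hw hv hbnd hx1 hx2 hlay
end

section
/- With layers as above, each point t of layer 2k is adjacent to a (possibly empty) prefix of the ordered points of layer 2k+1, and if t < t' are two points of layer 2k then the prefix of layer 2k+1 adjacent to t is contained in the prefix adjacent to t'. -/
/-!
A point `w` left of a top-boundary point `t` is no farther from the leftmost point `p₀` than `t`: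
a shortest path from `p₀` to `t` crosses the vertical line through `w` along an edge `u v`
with `u` top-left of `v`. If `w` lies below `u` it is adjacent to `u`; otherwise it is top-left
of `v`, so `v ≠ t` and `w` is adjacent to `v`. Either way `w` is reached within the length of
the path. Hence every point of layer `2k+1` lies to the right of every top-boundary point of
layer `2k`, and the quadrant conditions do the rest.
-/

namespace SimpleGraph.Walk

variable {V : Type*} {G : SimpleGraph V} {u v w : V}

lemma dist_le_of_adj_getVert (p : G.Walk u v) {i : ℕ} (h : G.Adj (p.getVert i) w) :
    G.dist u w ≤ i + 1 :=
  (G.dist_le ((p.take i).concat h)).trans <| by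
    simp only [length_concat, take_length]
    omega

end SimpleGraph.Walk

section PermutationGraph

variable {S : Finset (ℝ × ℝ)} {u v : ℝ × ℝ}

lemma pGraph_adj_of_inTL_s10 (hu : u ∈ S) (hv : v ∈ S) (h : inTL u v) : (pGraph S).Adj u v :=
  ⟨hu, hv, .inl h⟩

lemma inTL_of_pGraph_adj (h : (pGraph S).Adj u v) (hvu : ¬ inTL v u) : inTL u v :=
  h.2.2.resolve_right hvu

lemma dist_le_of_fst_lt_of_onTop (hS : DistinctCoords S) {p₀ : ℝ × ℝ}
    (hleft : ∀ q ∈ S, q ≠ p₀ → p₀.1 < q.1) {t : ℝ × ℝ} (hreach : (pGraph S).Reachable p₀ t)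
    (htT : onTop S t) {w : ℝ × ℝ} (hw : w ∈ S) (hwt : w.1 < t.1) :
    (pGraph S).dist p₀ w ≤ (pGraph S).dist p₀ t := by
  obtain rfl | hw₀ := eq_or_ne w p₀
  · simp
  obtain ⟨p, hp⟩ := hreach.exists_walk_length_eq_dist
  rw [← hp]
  obtain ⟨i, hui, hvi⟩ := Nat.exists_not_and_succ_of_not_zero_of_exists
    (p := fun i => w.1 ≤ (p.getVert i).1) (by simpa using hleft w hw hw₀)
    ⟨p.length, by simpa using hwt.le⟩
  have hi : i < p.length := by
    by_contra! h
    exact hui (by rw [p.getVert_of_length_le h]; exact hwt.le)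
  have huv : (pGraph S).Adj (p.getVert i) (p.getVert (i + 1)) := p.adj_getVert_succ hi
  obtain rfl | hvw := eq_or_ne (p.getVert (i + 1)) w
  · exact (p.dist_le_of_adj_getVert huv).trans (by omega)
  have hwv : w.1 < (p.getVert (i + 1)).1 := lt_of_le_of_ne hvi (hS _ huv.2.1 w hw hvw).1.symm
  have hvu : (p.getVert (i + 1)).2 < (p.getVert i).2 :=
    (inTL_of_pGraph_adj huv fun h => h.1.not_gt ((not_le.1 hui).trans hwv)).2
  have huw : p.getVert i ≠ w := fun h => hui (h ▸ le_rfl)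
  rcases (hS _ huv.1 w hw huw).2.lt_or_gt with hu_below | hu_above
  · have hwTL : inTL w (p.getVert (i + 1)) := ⟨hwv, hvu.trans hu_below⟩
    have hvt : i + 1 < p.length := by
      by_contra! h
      exact htT w hw (by rwa [p.getVert_of_length_le h] at hwTL)
    exact (p.dist_le_of_adj_getVert
      (pGraph_adj_of_inTL_s10 hw huv.2.1 hwTL).symm).trans (by omega)
  · exact (p.dist_le_of_adj_getVert
      (pGraph_adj_of_inTL_s10 huv.1 hw ⟨not_le.1 hui, hu_above⟩)).trans (by omega)

lemma fst_lt_of_dist_lt_of_onTop (hS : DistinctCoords S) {p₀ : ℝ × ℝ}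
    (hleft : ∀ q ∈ S, q ≠ p₀ → p₀.1 < q.1) {t b : ℝ × ℝ} (ht : t ∈ S)
    (hreach : (pGraph S).Reachable p₀ t) (htT : onTop S t) (hb : b ∈ S)
    (hlt : (pGraph S).dist p₀ t < (pGraph S).dist p₀ b) : t.1 < b.1 := by
  have hbt : b ≠ t := by rintro rfl; exact hlt.false
  refine ((hS b hb t ht hbt).1.lt_or_gt).resolve_left fun hbt₁ => ?_
  exact (dist_le_of_fst_lt_of_onTop hS hleft hreach htT hb hbt₁).not_gt hlt

end PermutationGraph

theorem stmt10_general (S : Finset (ℝ × ℝ)) (hS : DistinctCoords S)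
    (hconn : ∀ p ∈ S, ∀ q ∈ S, (pGraph S).Reachable p q)
    (p₀ : ℝ × ℝ) (hp₀ : p₀ ∈ S) (hleft : ∀ q ∈ S, q ≠ p₀ → p₀.1 < q.1)
    (L : ℝ × ℝ → ℕ) (hL : ∀ w, L w = (pGraph S).dist p₀ w)
    (k : ℕ)
    (t t' : ℝ × ℝ) (ht : t ∈ S) (ht' : t' ∈ S)
    (htT : onTop S t) (ht'T : onTop S t')
    (htL : L t = 2 * k) (ht'L : L t' = 2 * k) (htt' : t.1 < t'.1)
    (b b' : ℝ × ℝ) (hb : b ∈ S) (hb' : b' ∈ S)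
    (hb'B : onBottom S b')
    (hbL : L b = 2 * k + 1) (hb'L : L b' = 2 * k + 1) :
    (b'.1 < b.1 → (pGraph S).Adj t b → (pGraph S).Adj t b') ∧
    ((pGraph S).Adj t b → (pGraph S).Adj t' b) := by
  have right_of_layer {s c : ℝ × ℝ} (hs : s ∈ S) (hsT : onTop S s) (hsL : L s = 2 * k)
      (hc : c ∈ S) (hcL : L c = 2 * k + 1) : s.1 < c.1 :=
    fst_lt_of_dist_lt_of_onTop hS hleft hs (hconn p₀ hp₀ s hs) hsT hc
      (by rw [← hL, ← hL]; omega)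
  constructor
  · intro hb'b htb
    have htb := inTL_of_pGraph_adj htb (htT b hb)
    have hb'_below : b'.2 ≤ b.2 := not_lt.1 fun h => hb'B b hb ⟨hb'b, h⟩
    exact pGraph_adj_of_inTL_s10 ht hb'
      ⟨right_of_layer ht htT htL hb' hb'L, hb'_below.trans_lt htb.2⟩
  · intro htb
    have htb := inTL_of_pGraph_adj htb (htT b hb)
    have ht_below : t.2 ≤ t'.2 := not_lt.1 fun h => ht'T t ht ⟨htt', h⟩
    exact pGraph_adj_of_inTL_s10 ht' hb
      ⟨right_of_layer ht' ht'T ht'L hb hbL, htb.2.trans_le ht_below⟩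

/-- each point `t` of layer `2k` (on the top boundary) is adjacent to a
prefix of the ordered points of layer `2k+1` (on the bottom boundary), and these
prefixes grow monotonically along layer `2k`: if `t < t'` in layer `2k` then every
layer-`(2k+1)` neighbour of `t` is also a neighbour of `t'`. -/
theorem stmt10 (S : Finset (ℝ × ℝ)) (hS : DistinctCoords S)
    (hconn : ∀ p ∈ S, ∀ q ∈ S, (pGraph S).Reachable p q)
    (p₀ : ℝ × ℝ) (hp₀ : p₀ ∈ S) (hleft : ∀ q ∈ S, q ≠ p₀ → p₀.1 < q.1)
    (L : ℝ × ℝ → ℕ) (hL : ∀ w, L w = (pGraph S).dist p₀ w)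
    (k : ℕ)
    (t t' : ℝ × ℝ) (ht : t ∈ S) (ht' : t' ∈ S)
    (htT : onTop S t) (ht'T : onTop S t')
    (htL : L t = 2 * k) (ht'L : L t' = 2 * k) (htt' : t.1 < t'.1)
    (b b' : ℝ × ℝ) (hb : b ∈ S) (hb' : b' ∈ S)
    (hbB : onBottom S b) (hb'B : onBottom S b')
    (hbL : L b = 2 * k + 1) (hb'L : L b' = 2 * k + 1) :
    (b'.1 < b.1 → (pGraph S).Adj t b → (pGraph S).Adj t b') ∧
    ((pGraph S).Adj t b → (pGraph S).Adj t' b) :=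
  stmt10_general S hS hconn p₀ hp₀ hleft L hL k t t' ht ht' htT ht'T htL ht'L htt' b b' hb hb' hb'B
    hbL hb'L
end

section
/- There exists a total ordering λ on the boundary points of a connected permutation graph such that for any two boundary points u, v with L(u) < L(v), the distance d(u,v) equals L(v) − L(u) if and only if λ(u) > λ(v). -/
/-!
Layers alternate between being ordered by `x` and by `y`: with `keyAt j` the coordinate of
layer `j`, every point of layer `j` precedes all later layers in `keyAt j`, and a point of
layer `j` is adjacent to a point of layer `j + 1` exactly when the latter precedes it in
`keyAt (j + 1)`. So the points of layer `j + 1` reached quickly from `w` are those below the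
largest key among the points of layer `j` reached quickly from `w`, and `w` is described by its
profile `j ↦ maxKey w j`. If `v` is reached quickly from `u`, whatever `v` reaches quickly `u`
also does, so the profile of `u` dominates that of `v`, strictly at the layer of `u`. If not,
and `v` is a boundary point, then everything `u` reaches quickly in the layer of `v` lies
below `v` in both coordinates, so from that layer on `v` dominates `u`. Ranking the boundary
points colexicographically by profile gives `λ`.
-/

namespace SimpleGraph
variable {V : Type*} {G : SimpleGraph V} {u v w : V}

lemma Adj.dist_le_dist_add_one (hadj : G.Adj v w) (u : V) : G.dist u w ≤ G.dist u v + 1 := by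
  simpa [dist_eq_one_iff_adj.mpr hadj] using hadj.reachable.dist_triangle_right u

lemma Reachable.exists_adj_dist_eq_of_dist_eq_add_one {n : ℕ} (hr : G.Reachable u w)
    (h : G.dist u w = n + 1) : ∃ v, G.Adj v w ∧ G.dist u v = n := by
  obtain ⟨p, hp⟩ := hr.exists_walk_length_eq_dist
  cases hq : p.reverse with
  | nil => simp_all
  | @cons _ v _ hadj q =>
    have hlen : q.length = n := by
      have := congrArg Walk.length hq
      simp only [Walk.length_reverse, Walk.length_cons] at this
      omega
    have hle : G.dist u v ≤ n := by
      simpa [hlen] using dist_le q.reverse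
    have := hadj.symm.dist_le_dist_add_one u
    exact ⟨v, hadj.symm, by omega⟩

end SimpleGraph

theorem Pi.toColex_lt_toColex_of_le_of_lt {ι : Type*} [LinearOrder ι] [WellFoundedGT ι]
    {β : ι → Type*} [∀ i, PartialOrder (β i)] {x y : ∀ i, β i} (i : ι)
    (hle : ∀ j, i ≤ j → x j ≤ y j) (hlt : x i < y i) : toColex x < toColex y := by
  obtain ⟨k, hk, hmax⟩ := IsWellFounded.wf.has_min (r := (· > ·)) {j | x j ≠ y j} ⟨i, hlt.ne⟩
  have hik : i ≤ k := not_lt.1 fun h => hmax i hlt.ne h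
  exact ⟨k, fun j hj => not_not.1 fun h => hmax j h hj, (hle k hik).lt_of_ne hk⟩

open Finset in
theorem Finset.card_filter_lt_lt_card_filter_lt {α β : Type*} [Preorder β] [DecidableLT β]
    {s : Finset α} {f : α → β} {a b : α} (ha : a ∈ s) (h : f a < f b) :
    #{z ∈ s | f z < f a} < #{z ∈ s | f z < f b} := by
  refine card_lt_card ⟨fun z hz => ?_, fun hsub => ?_⟩
  · simp only [mem_filter] at hz ⊢
    exact ⟨hz.1, hz.2.trans h⟩
  · exact lt_irrefl _ (mem_filter.1 (hsub (mem_filter.2 ⟨ha, h⟩))).2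

namespace PermGraph

open SimpleGraph Finset

variable {S : Finset (ℝ × ℝ)} {p₀ : ℝ × ℝ}

/-- The paper's layer `L`. -/
noncomputable def layer (S : Finset (ℝ × ℝ)) (p₀ w : ℝ × ℝ) : ℕ := (pGraph S).dist p₀ w

lemma layer_eq_zero_iff (hconn : ∀ p ∈ S, ∀ q ∈ S, (pGraph S).Reachable p q)
    (hp₀ : p₀ ∈ S) {z : ℝ × ℝ} (hz : z ∈ S) : layer S p₀ z = 0 ↔ z = p₀ :=
  (hconn p₀ hp₀ z hz).dist_eq_zero_iff.trans eq_comm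

lemma layer_le_layer_add_one_of_adj {y z : ℝ × ℝ} (hadj : (pGraph S).Adj y z) :
    layer S p₀ z ≤ layer S p₀ y + 1 :=
  hadj.dist_le_dist_add_one p₀

lemma layer_le_layer_add_dist {u v : ℝ × ℝ} (huv : (pGraph S).Reachable u v) :
    layer S p₀ v ≤ layer S p₀ u + (pGraph S).dist u v :=
  huv.dist_triangle_right p₀

lemma exists_adj_of_layer_eq_add_one (hconn : ∀ p ∈ S, ∀ q ∈ S, (pGraph S).Reachable p q)
    (hp₀ : p₀ ∈ S) {z : ℝ × ℝ} (hz : z ∈ S) {n : ℕ} (h : layer S p₀ z = n + 1) :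
    ∃ y ∈ S, (pGraph S).Adj y z ∧ layer S p₀ y = n := by
  obtain ⟨y, hadj, hy⟩ := (hconn p₀ hp₀ z hz).exists_adj_dist_eq_of_dist_eq_add_one h
  exact ⟨y, hadj.1, hadj, hy⟩

/-- The points of layer `j` reached from `w` by a quick path, of length `j - layer w`. -/
noncomputable def quickSet (S : Finset (ℝ × ℝ)) (p₀ w : ℝ × ℝ) (j : ℕ) : Finset (ℝ × ℝ) :=
  {z ∈ S | layer S p₀ z = j ∧ layer S p₀ w + (pGraph S).dist w z = j}

lemma mem_quickSet {w z : ℝ × ℝ} {j : ℕ} : z ∈ quickSet S p₀ w j ↔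
    z ∈ S ∧ layer S p₀ z = j ∧ layer S p₀ w + (pGraph S).dist w z = j :=
  mem_filter

lemma quickSet_layer_self (hconn : ∀ p ∈ S, ∀ q ∈ S, (pGraph S).Reachable p q)
    {w : ℝ × ℝ} (hw : w ∈ S) : quickSet S p₀ w (layer S p₀ w) = {w} := by
  ext z
  simp only [mem_quickSet, mem_singleton, Nat.add_eq_left]
  constructor
  · rintro ⟨hz, -, h⟩
    exact ((hconn w hw z hz).dist_eq_zero_iff.1 h).symm
  · rintro rfl
    exact ⟨hw, rfl, dist_self⟩

lemma quickSet_eq_empty_of_lt {w : ℝ × ℝ} {j : ℕ} (hj : j < layer S p₀ w) :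
    quickSet S p₀ w j = ∅ :=
  filter_eq_empty_iff.2 fun _ _ h => by omega

lemma mem_quickSet_succ_iff (hconn : ∀ p ∈ S, ∀ q ∈ S, (pGraph S).Reachable p q)
    {w z : ℝ × ℝ} {j : ℕ} (hw : w ∈ S) (hj : layer S p₀ w ≤ j) (hz : layer S p₀ z = j + 1) :
    z ∈ quickSet S p₀ w (j + 1) ↔ ∃ y ∈ quickSet S p₀ w j, (pGraph S).Adj y z := by
  constructor
  · intro hzq
    obtain ⟨hzS, -, hwz⟩ := mem_quickSet.1 hzq
    obtain ⟨y, hadj, hwy⟩ := (hconn w hw z hzS).exists_adj_dist_eq_of_dist_eq_add_one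
      (n := j - layer S p₀ w) (by omega)
    have h₁ := layer_le_layer_add_dist (p₀ := p₀) (hconn w hw y hadj.1)
    have h₂ := layer_le_layer_add_one_of_adj (p₀ := p₀) hadj
    exact ⟨y, mem_quickSet.2 ⟨hadj.1, by omega, by omega⟩, hadj⟩
  · rintro ⟨y, hyq, hadj⟩
    obtain ⟨-, -, hwy⟩ := mem_quickSet.1 hyq
    have h₁ := layer_le_layer_add_dist (p₀ := p₀) (hconn w hw z hadj.2.1)
    have h₂ := hadj.dist_le_dist_add_one w
    exact mem_quickSet.2 ⟨hadj.2.1, hz, by omega⟩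

lemma quickSet_subset_of_le (hconn : ∀ p ∈ S, ∀ q ∈ S, (pGraph S).Reachable p q)
    {a b : ℝ × ℝ} (ha : a ∈ S) (hb : b ∈ S) {j : ℕ} (haj : layer S p₀ a ≤ j)
    (hbj : layer S p₀ b ≤ j) (h : quickSet S p₀ a j ⊆ quickSet S p₀ b j) {k : ℕ} (hk : j ≤ k) :
    quickSet S p₀ a k ⊆ quickSet S p₀ b k := by
  induction k, hk using Nat.le_induction with
  | base => exact h
  | succ k hk ih =>
    intro z hz
    have hzk := (mem_quickSet.1 hz).2.1
    obtain ⟨y, hy, hadj⟩ := (mem_quickSet_succ_iff hconn ha (by omega) hzk).1 hz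
    exact (mem_quickSet_succ_iff hconn hb (by omega) hzk).2 ⟨y, ih hy, hadj⟩

/-- The coordinate that orders layer `j`. -/
def keyAt (j : ℕ) (p : ℝ × ℝ) : ℝ := if Even j then p.1 else p.2

lemma keyAt_ne (hS : DistinctCoords S) {a b : ℝ × ℝ} (ha : a ∈ S) (hb : b ∈ S) (hne : a ≠ b)
    (j : ℕ) : keyAt j a ≠ keyAt j b := by
  unfold keyAt
  split_ifs
  exacts [(hS a ha b hb hne).1, (hS a ha b hb hne).2]

lemma adj_iff_keyAt_succ_lt {a b : ℝ × ℝ} (ha : a ∈ S) (hb : b ∈ S) {j : ℕ}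
    (h : keyAt j a < keyAt j b) : (pGraph S).Adj a b ↔ keyAt (j + 1) b < keyAt (j + 1) a := by
  simp only [pGraph, inTL, ha, hb, true_and]
  rcases Nat.even_or_odd j with hj | hj
  · simp only [keyAt, hj, Nat.even_add_one, if_true, not_true, if_false] at h ⊢
    grind
  · simp only [keyAt, Nat.not_even_iff_odd.2 hj, Nat.even_add_one, if_false, not_false_iff,
      if_true] at h ⊢
    grind

structure RootedPermSet (S : Finset (ℝ × ℝ)) (p₀ : ℝ × ℝ) : Prop where
  distinct : DistinctCoords S
  reachable : ∀ p ∈ S, ∀ q ∈ S, (pGraph S).Reachable p q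
  root_mem : p₀ ∈ S
  root_leftmost : ∀ q ∈ S, q ≠ p₀ → p₀.1 < q.1

lemma keyAt_lt_of_layer_lt (h : RootedPermSet S p₀) {z w : ℝ × ℝ} (hz : z ∈ S) (hw : w ∈ S)
    (hzw : layer S p₀ z < layer S p₀ w) :
    keyAt (layer S p₀ z) z < keyAt (layer S p₀ z) w := by
  induction hj : layer S p₀ z generalizing z w with
  | zero =>
    obtain rfl := (layer_eq_zero_iff h.reachable h.root_mem hz).1 hj
    exact h.root_leftmost w hw (by rintro rfl; omega)
  | succ j ih =>
    obtain ⟨y, hy, hyz, hyj⟩ := exists_adj_of_layer_eq_add_one h.reachable h.root_mem hz hj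
    have hzy := (adj_iff_keyAt_succ_lt hy hz (ih hy hz (by omega) hyj)).1 hyz
    -- otherwise the parent `y` of `z` would be adjacent to `w`, putting `w` in layer `j + 1`
    by_contra! hwz
    have hwz' := hwz.lt_of_ne (keyAt_ne h.distinct hw hz (by rintro rfl; omega) _)
    have hyw := (adj_iff_keyAt_succ_lt hy hw (ih hy hw (by omega) hyj)).2 (hwz'.trans hzy)
    have := layer_le_layer_add_one_of_adj (p₀ := p₀) hyw
    omega

lemma adj_iff_of_layer_eq (h : RootedPermSet S p₀) {y z : ℝ × ℝ} (hy : y ∈ S) (hz : z ∈ S)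
    {j : ℕ} (hyj : layer S p₀ y = j) (hzj : layer S p₀ z = j + 1) :
    (pGraph S).Adj y z ↔ keyAt (j + 1) z < keyAt (j + 1) y := by
  subst hyj
  exact adj_iff_keyAt_succ_lt hy hz (keyAt_lt_of_layer_lt h hy hz (by omega))

def IsExtremeAt (S : Finset (ℝ × ℝ)) (j : ℕ) (v : ℝ × ℝ) : Prop :=
  ∀ q ∈ S, keyAt j q < keyAt j v → keyAt (j + 1) q ≤ keyAt (j + 1) v

lemma isExtremeAt_iff {j : ℕ} {v : ℝ × ℝ} :
    IsExtremeAt S j v ↔ if Even j then onTop S v else onBottom S v := by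
  unfold IsExtremeAt onTop onBottom inTL
  rcases Nat.even_or_odd j with hj | hj
  · simp [keyAt, hj, Nat.even_add_one]
  · simp [keyAt, Nat.not_even_iff_odd.2 hj, Nat.even_add_one]
    grind

lemma onTop_root (hleft : ∀ q ∈ S, q ≠ p₀ → p₀.1 < q.1) : onTop S p₀ := by
  rintro q hq ⟨hq₀, -⟩
  obtain rfl | hne := eq_or_ne q p₀
  · exact lt_irrefl _ hq₀
  · exact (hleft q hq hne).not_gt hq₀

lemma isExtremeAt_layer (h : RootedPermSet S p₀) {v : ℝ × ℝ} (hv : v ∈ S)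
    (hb : onTop S v ∨ onBottom S v) : IsExtremeAt S (layer S p₀ v) v := by
  rw [isExtremeAt_iff]
  rcases hl : layer S p₀ v with _ | k
  · obtain rfl := (layer_eq_zero_iff h.reachable h.root_mem hv).1 hl
    simpa using onTop_root h.root_leftmost
  · obtain ⟨y, hy, hyv, hyk⟩ := exists_adj_of_layer_eq_add_one h.reachable h.root_mem hv hl
    have hyv' := keyAt_lt_of_layer_lt h hy hv (by omega)
    rw [hyk] at hyv'
    -- the parent `y` of `v` rules out the side of layer `k`, so `hb` leaves that of `k + 1`
    have hnot : ¬IsExtremeAt S k v := fun hext =>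
      (hext y hy hyv').not_gt ((adj_iff_keyAt_succ_lt hy hv hyv').1 hyv)
    rw [isExtremeAt_iff] at hnot
    rcases Nat.even_or_odd k with hk | hk
    · simp_all [Nat.even_add_one]
    · simp_all [Nat.not_even_iff_odd.2 hk]

lemma keyAt_lt_of_mem_quickSet (h : RootedPermSet S p₀) {u v z : ℝ × ℝ} (hu : u ∈ S)
    (hv : v ∈ S) (hlt : layer S p₀ u < layer S p₀ v) (hnq : v ∉ quickSet S p₀ u (layer S p₀ v))
    (hz : z ∈ quickSet S p₀ u (layer S p₀ v)) :
    keyAt (layer S p₀ v) z < keyAt (layer S p₀ v) v := by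
  obtain ⟨k, hk⟩ : ∃ k, layer S p₀ v = k + 1 := ⟨layer S p₀ v - 1, by omega⟩
  rw [hk] at hnq hz ⊢
  obtain ⟨hzS, hzk, -⟩ := mem_quickSet.1 hz
  obtain ⟨y, hy, hyz⟩ := (mem_quickSet_succ_iff h.reachable hu (by omega) hzk).1 hz
  obtain ⟨hyS, hyk, -⟩ := mem_quickSet.1 hy
  have hzy := (adj_iff_of_layer_eq h hyS hzS hyk hzk).1 hyz
  refine lt_of_le_of_ne (not_lt.1 fun hvz => hnq ?_)
    (keyAt_ne h.distinct hzS hv (by rintro rfl; exact hnq hz) _)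
  exact (mem_quickSet_succ_iff h.reachable hu (by omega) hk).2
    ⟨y, hy, (adj_iff_of_layer_eq h hyS hv hyk hk).2 (hvz.trans hzy)⟩

lemma quickSet_succ_subset_of_notMem (h : RootedPermSet S p₀) {u v : ℝ × ℝ} (hu : u ∈ S)
    (hv : v ∈ S) (hb : onTop S v ∨ onBottom S v) (hlt : layer S p₀ u < layer S p₀ v)
    (hnq : v ∉ quickSet S p₀ u (layer S p₀ v)) :
    quickSet S p₀ u (layer S p₀ v + 1) ⊆ quickSet S p₀ v (layer S p₀ v + 1) := by
  intro z hz
  obtain ⟨hzS, hzl, -⟩ := mem_quickSet.1 hz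
  obtain ⟨y, hy, hyz⟩ := (mem_quickSet_succ_iff h.reachable hu hlt.le hzl).1 hz
  obtain ⟨hyS, hyl, -⟩ := mem_quickSet.1 hy
  have hzy := (adj_iff_of_layer_eq h hyS hzS hyl hzl).1 hyz
  have hyv := (isExtremeAt_layer h hv hb y hyS
    (keyAt_lt_of_mem_quickSet h hu hv hlt hnq hy)).lt_of_ne
      (keyAt_ne h.distinct hyS hv (by rintro rfl; exact hnq hy) _)
  refine (mem_quickSet_succ_iff h.reachable hv le_rfl hzl).2 ⟨v, ?_, ?_⟩
  · simp [quickSet_layer_self h.reachable hv]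
  · exact (adj_iff_of_layer_eq h hv hzS rfl hzl).2 (hzy.trans hyv)

noncomputable def maxKey (S : Finset (ℝ × ℝ)) (p₀ w : ℝ × ℝ) (j : ℕ) : WithBot ℝ :=
  (quickSet S p₀ w j).sup fun z => (keyAt j z : WithBot ℝ)

lemma maxKey_layer_self (hconn : ∀ p ∈ S, ∀ q ∈ S, (pGraph S).Reachable p q) {w : ℝ × ℝ}
    (hw : w ∈ S) : maxKey S p₀ w (layer S p₀ w) = keyAt (layer S p₀ w) w := by
  simp [maxKey, quickSet_layer_self hconn hw]

lemma maxKey_eq_bot_of_lt {w : ℝ × ℝ} {j : ℕ} (hj : j < layer S p₀ w) : maxKey S p₀ w j = ⊥ := by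
  simp [maxKey, quickSet_eq_empty_of_lt hj]

lemma maxKey_mono {u v : ℝ × ℝ} {j : ℕ} (h : quickSet S p₀ u j ⊆ quickSet S p₀ v j) :
    maxKey S p₀ u j ≤ maxKey S p₀ v j :=
  sup_mono h

/-- `λ` ranks the boundary points by their profiles; in the colexicographic order the last
layer on which two profiles differ decides. -/
noncomputable def profile (S : Finset (ℝ × ℝ)) (p₀ w : ℝ × ℝ) :
    Colex (S.image (layer S p₀) → WithBot ℝ) :=
  toColex fun j => maxKey S p₀ w j

lemma profile_ne (hS : DistinctCoords S) (hconn : ∀ p ∈ S, ∀ q ∈ S, (pGraph S).Reachable p q)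
    {u v : ℝ × ℝ} (hu : u ∈ S) (hv : v ∈ S) (hne : u ≠ v) : profile S p₀ u ≠ profile S p₀ v := by
  intro heq
  have hmax : ∀ j ∈ S.image (layer S p₀), maxKey S p₀ u j = maxKey S p₀ v j :=
    fun j hj => congrFun (toColex.injective heq) ⟨j, hj⟩
  wlog hle : layer S p₀ u ≤ layer S p₀ v generalizing u v
  · exact this hv hu hne.symm heq.symm (fun j hj => (hmax j hj).symm) (by omega)
  have hu' := hmax _ (mem_image_of_mem _ hu)
  rw [maxKey_layer_self hconn hu] at hu'
  rcases hle.eq_or_lt with hl | hl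
  · rw [hl, maxKey_layer_self hconn hv] at hu'
    exact keyAt_ne hS hu hv hne _ (WithBot.coe_injective hu')
  · rw [maxKey_eq_bot_of_lt hl] at hu'
    exact WithBot.coe_ne_bot hu'

lemma profile_lt_of_quick (hconn : ∀ p ∈ S, ∀ q ∈ S, (pGraph S).Reachable p q)
    {u v : ℝ × ℝ} (hu : u ∈ S) (hv : v ∈ S) (hlt : layer S p₀ u < layer S p₀ v)
    (hq : layer S p₀ u + (pGraph S).dist u v = layer S p₀ v) : profile S p₀ v < profile S p₀ u := by
  have hsub : quickSet S p₀ v (layer S p₀ v) ⊆ quickSet S p₀ u (layer S p₀ v) := by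
    simpa [quickSet_layer_self hconn hv] using mem_quickSet.2 ⟨hv, rfl, hq⟩
  refine Pi.toColex_lt_toColex_of_le_of_lt ⟨layer S p₀ u, mem_image_of_mem _ hu⟩
    (fun j _ => ?_) ?_
  · rcases lt_or_ge (j : ℕ) (layer S p₀ v) with hj | hj
    · exact (maxKey_eq_bot_of_lt hj).trans_le bot_le
    · exact maxKey_mono (quickSet_subset_of_le hconn hv hu le_rfl hlt.le hsub hj)
  · change maxKey S p₀ v (layer S p₀ u) < maxKey S p₀ u (layer S p₀ u)
    rw [maxKey_eq_bot_of_lt hlt, maxKey_layer_self hconn hu]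
    exact WithBot.bot_lt_coe _

lemma profile_lt_of_not_quick (h : RootedPermSet S p₀) {u v : ℝ × ℝ} (hu : u ∈ S) (hv : v ∈ S)
    (hb : onTop S v ∨ onBottom S v) (hlt : layer S p₀ u < layer S p₀ v)
    (hnq : layer S p₀ u + (pGraph S).dist u v ≠ layer S p₀ v) :
    profile S p₀ u < profile S p₀ v := by
  have hnq' : v ∉ quickSet S p₀ u (layer S p₀ v) := fun hv' => hnq (mem_quickSet.1 hv').2.2
  have hlast : maxKey S p₀ u (layer S p₀ v) < maxKey S p₀ v (layer S p₀ v) := by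
    rw [maxKey_layer_self h.reachable hv, maxKey, Finset.sup_lt_iff (WithBot.bot_lt_coe _)]
    exact fun z hz => WithBot.coe_lt_coe.2 (keyAt_lt_of_mem_quickSet h hu hv hlt hnq' hz)
  refine Pi.toColex_lt_toColex_of_le_of_lt ⟨layer S p₀ v, mem_image_of_mem _ hv⟩
    (fun j hj => ?_) hlast
  rcases (show layer S p₀ v ≤ j from hj).eq_or_lt with hj | hj
  · exact hj ▸ hlast.le
  · exact maxKey_mono (quickSet_subset_of_le h.reachable hu hv (by omega) (by omega)
      (quickSet_succ_subset_of_notMem h hu hv hb hlt hnq') hj)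

end PermGraph

open PermGraph Finset

/-- there is a total ordering `lam` of the boundary points such that for
boundary points `u, v` with `L u < L v`, the distance `d(u,v)` equals `L v − L u`
(a quick path exists) iff `lam u > lam v`. -/
theorem stmt11 (S : Finset (ℝ × ℝ)) (hS : DistinctCoords S)
    (hconn : ∀ p ∈ S, ∀ q ∈ S, (pGraph S).Reachable p q)
    (p₀ : ℝ × ℝ) (hp₀ : p₀ ∈ S) (hleft : ∀ q ∈ S, q ≠ p₀ → p₀.1 < q.1)
    (L : ℝ × ℝ → ℕ) (hL : ∀ w, L w = (pGraph S).dist p₀ w) :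
    ∃ lam : ℝ × ℝ → ℕ,
      (∀ u ∈ S, ∀ v ∈ S, (onTop S u ∨ onBottom S u) → (onTop S v ∨ onBottom S v) →
        u ≠ v → lam u ≠ lam v) ∧
      (∀ u ∈ S, ∀ v ∈ S, (onTop S u ∨ onBottom S u) → (onTop S v ∨ onBottom S v) →
        L u < L v → ((pGraph S).dist u v = L v - L u ↔ lam v < lam u)) := by
  classical
  have h : RootedPermSet S p₀ := ⟨hS, hconn, hp₀, hleft⟩
  let B := {w ∈ S | onTop S w ∨ onBottom S w}
  have hB {w} (hw : w ∈ S) (hb : onTop S w ∨ onBottom S w) : w ∈ B := mem_filter.2 ⟨hw, hb⟩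
  refine ⟨fun w => #{z ∈ B | profile S p₀ z < profile S p₀ w}, ?_, ?_⟩
  · intro u hu v hv hbu hbv hne
    rcases lt_or_gt_of_ne (profile_ne hS hconn hu hv hne) with hlt | hlt
    · exact (card_filter_lt_lt_card_filter_lt (hB hu hbu) hlt).ne
    · exact (card_filter_lt_lt_card_filter_lt (hB hv hbv) hlt).ne'
  · intro u hu v hv hbu hbv huv
    rw [hL, hL] at huv ⊢
    constructor
    · intro hq
      exact card_filter_lt_lt_card_filter_lt (hB hv hbv)
        (profile_lt_of_quick hconn hu hv huv (by unfold layer; omega))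
    · intro hlam
      by_contra hnq
      exact lt_asymm hlam (card_filter_lt_lt_card_filter_lt (hB hu hbu)
        (profile_lt_of_not_quick h hu hv hbv huv (by unfold layer; omega)))
end

section
/- For a non-boundary vertex v, the set of its neighbors on the bottom boundary forms a contiguous interval in the boundary order of bottom-boundary points, and similarly for the top boundary. -/
/-! A bottom-boundary neighbour of `v` lies in the bottom-right quadrant of `v`, and the
bottom boundary is increasing in both coordinates. So if `a.1 < b.1 < c.1` with `a`, `c`
neighbours of `v`, then `v.1 < a.1 < b.1` and `b.2 ≤ c.2 < v.2`, i.e. `b` is a neighbour too.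
The top boundary is symmetric. -/

variable {S : Finset (ℝ × ℝ)} {a b c v : ℝ × ℝ}

theorem onBottom.inTL_of_adj (ha : onBottom S a) (h : (pGraph S).Adj v a) : inTL v a :=
  h.2.2.resolve_right (ha v h.1)

theorem onTop.inTL_of_adj (ha : onTop S a) (h : (pGraph S).Adj v a) : inTL a v :=
  h.2.2.resolve_left (ha v h.1)

theorem onBottom.snd_le_of_fst_lt (hb : onBottom S b) (hc : c ∈ S) (h : b.1 < c.1) :
    b.2 ≤ c.2 :=
  le_of_not_gt fun h' => hb c hc ⟨h, h'⟩

theorem onTop.snd_le_of_fst_lt (hb : onTop S b) (ha : a ∈ S) (h : a.1 < b.1) :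
    a.2 ≤ b.2 :=
  le_of_not_gt fun h' => hb a ha ⟨h, h'⟩

theorem pGraph_adj_of_onBottom_of_lt_of_lt (hb : b ∈ S) (hc : c ∈ S)
    (ha' : onBottom S a) (hb' : onBottom S b) (hc' : onBottom S c)
    (hab : a.1 < b.1) (hbc : b.1 < c.1)
    (hva : (pGraph S).Adj v a) (hvc : (pGraph S).Adj v c) : (pGraph S).Adj v b :=
  ⟨hva.1, hb, Or.inl ⟨(ha'.inTL_of_adj hva).1.trans hab,
    (hb'.snd_le_of_fst_lt hc hbc).trans_lt (hc'.inTL_of_adj hvc).2⟩⟩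

theorem pGraph_adj_of_onTop_of_lt_of_lt (ha : a ∈ S) (hb : b ∈ S)
    (ha' : onTop S a) (hb' : onTop S b) (hc' : onTop S c)
    (hab : a.1 < b.1) (hbc : b.1 < c.1)
    (hva : (pGraph S).Adj v a) (hvc : (pGraph S).Adj v c) : (pGraph S).Adj v b :=
  ⟨hva.1, hb, Or.inr ⟨hbc.trans (hc'.inTL_of_adj hvc).1,
    (ha'.inTL_of_adj hva).2.trans_le (hb'.snd_le_of_fst_lt ha hab)⟩⟩

theorem stmt13_general (S : Finset (ℝ × ℝ))
    (v : ℝ × ℝ) :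
    (∀ a ∈ S, ∀ b ∈ S, ∀ c ∈ S,
      onBottom S a → onBottom S b → onBottom S c →
      a.1 < b.1 → b.1 < c.1 →
      (pGraph S).Adj v a → (pGraph S).Adj v c → (pGraph S).Adj v b) ∧
    (∀ a ∈ S, ∀ b ∈ S, ∀ c ∈ S,
      onTop S a → onTop S b → onTop S c →
      a.1 < b.1 → b.1 < c.1 →
      (pGraph S).Adj v a → (pGraph S).Adj v c → (pGraph S).Adj v b) :=
  ⟨fun _ _ _ hb _ hc => pGraph_adj_of_onBottom_of_lt_of_lt hb hc,
    fun _ ha _ hb _ _ => pGraph_adj_of_onTop_of_lt_of_lt ha hb⟩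

/-- for a non-boundary vertex `v`, the neighbours of `v` on the bottom
boundary form a contiguous interval of the bottom boundary in boundary order, and
similarly for the top boundary. -/
theorem stmt13 (S : Finset (ℝ × ℝ)) (hS : DistinctCoords S)
    (hconn : ∀ p ∈ S, ∀ q ∈ S, (pGraph S).Reachable p q)
    (v : ℝ × ℝ) (hv : v ∈ S) (hvnb : ¬ onTop S v ∧ ¬ onBottom S v) :
    (∀ a ∈ S, ∀ b ∈ S, ∀ c ∈ S,
      onBottom S a → onBottom S b → onBottom S c →
      a.1 < b.1 → b.1 < c.1 →
      (pGraph S).Adj v a → (pGraph S).Adj v c → (pGraph S).Adj v b) ∧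
    (∀ a ∈ S, ∀ b ∈ S, ∀ c ∈ S,
      onTop S a → onTop S b → onTop S c →
      a.1 < b.1 → b.1 < c.1 →
      (pGraph S).Adj v a → (pGraph S).Adj v c → (pGraph S).Adj v b) :=
  stmt13_general S v
end

section
/- For any two vertices u, v of a connected permutation graph, d(u,v) ≤ 2 if and only if the interval of u's bottom-boundary neighbors intersects the interval of v's bottom-boundary neighbors, or the interval of u's top-boundary neighbors intersects the interval of v's top-boundary neighbors. -/
/-!
A path `u - w - v` either turns at `w`, so that `w` lies in the top-left quadrant of both `u`
and `v` or in the bottom-right quadrant of both, or it is monotone, so that `u` and `v` are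
adjacent. In the turning case the highest (resp. lowest) point of `S` in the common quadrant is a
common neighbour on the top (resp. bottom) boundary: a point of `S` beyond it would lie in the
common quadrant too. When `u` and `v` are adjacent or equal, a point in the top-left quadrant of
the upper-left one of them, which exists as it is not on the top boundary, lies in the common
top-left quadrant.
-/

lemma SimpleGraph.Reachable.dist_le_two_iff {V : Type*} {G : SimpleGraph V} {u v : V}
    (h : G.Reachable u v) :
    G.dist u v ≤ 2 ↔ u = v ∨ G.Adj u v ∨ ∃ w, G.Adj u w ∧ G.Adj w v := by
  constructor
  · intro hd
    obtain ⟨p, hp⟩ := h.exists_walk_length_eq_dist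
    rw [← hp] at hd
    match p with
    | .nil => exact .inl rfl
    | .cons huv .nil => exact .inr (.inl huv)
    | .cons huw (.cons hwv .nil) => exact .inr (.inr ⟨_, huw, hwv⟩)
    | .cons _ (.cons _ (.cons _ _)) => simp at hd
  · rintro (rfl | huv | ⟨w, huw, hwv⟩)
    · simp
    · simp [SimpleGraph.dist_eq_one_iff_adj.2 huv]
    · simpa using G.dist_le (.cons huw (.cons hwv .nil))

section

variable {S : Finset (ℝ × ℝ)} {u v w : ℝ × ℝ}

lemma exists_inTL_of_not_onTop (h : ¬ onTop S u) : ∃ q ∈ S, inTL q u := by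
  simpa [onTop] using h

lemma exists_inTL_inTL_of_adj (hunt : ¬ onTop S u) (hvnt : ¬ onTop S v)
    (huv : (pGraph S).Adj u v) : ∃ q ∈ S, inTL q u ∧ inTL q v := by
  rcases huv.2.2 with huv | hvu
  · obtain ⟨q, hq, hqu⟩ := exists_inTL_of_not_onTop hunt
    exact ⟨q, hq, hqu, inTL_trans hqu huv⟩
  · obtain ⟨q, hq, hqv⟩ := exists_inTL_of_not_onTop hvnt
    exact ⟨q, hq, inTL_trans hqv hvu, hqv⟩

lemma exists_onTop_adj_adj_of_inTL (hu : u ∈ S) (hv : v ∈ S) (hw : w ∈ S)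
    (hwu : inTL w u) (hwv : inTL w v) :
    ∃ t ∈ S, onTop S t ∧ (pGraph S).Adj u t ∧ (pGraph S).Adj v t := by
  classical
  obtain ⟨t, ht, htmax⟩ := (S.filter fun q => inTL q u ∧ inTL q v).exists_max_image
    Prod.snd ⟨w, Finset.mem_filter.2 ⟨hw, hwu, hwv⟩⟩
  obtain ⟨htS, htu, htv⟩ := Finset.mem_filter.1 ht
  refine ⟨t, htS, fun q hq hqt => ?_, ⟨hu, htS, .inr htu⟩, ⟨hv, htS, .inr htv⟩⟩
  exact (htmax q (Finset.mem_filter.2 ⟨hq, inTL_trans hqt htu, inTL_trans hqt htv⟩)).not_gt hqt.2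

lemma exists_onBottom_adj_adj_of_inTL (hu : u ∈ S) (hv : v ∈ S) (hw : w ∈ S)
    (huw : inTL u w) (hvw : inTL v w) :
    ∃ b ∈ S, onBottom S b ∧ (pGraph S).Adj u b ∧ (pGraph S).Adj v b := by
  classical
  obtain ⟨b, hb, hbmin⟩ := (S.filter fun q => inTL u q ∧ inTL v q).exists_min_image
    Prod.snd ⟨w, Finset.mem_filter.2 ⟨hw, huw, hvw⟩⟩
  obtain ⟨hbS, hub, hvb⟩ := Finset.mem_filter.1 hb
  refine ⟨b, hbS, fun q hq hbq => ?_, ⟨hu, hbS, .inl hub⟩, ⟨hv, hbS, .inl hvb⟩⟩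
  exact (hbmin q (Finset.mem_filter.2 ⟨hq, inTL_trans hub hbq, inTL_trans hvb hbq⟩)).not_gt hbq.2

end

theorem stmt14_general (S : Finset (ℝ × ℝ))
    (hconn : ∀ p ∈ S, ∀ q ∈ S, (pGraph S).Reachable p q)
    (u v : ℝ × ℝ) (hu : u ∈ S) (hv : v ∈ S)
    (hunb : ¬ onTop S u ∧ ¬ onBottom S u) (hvnb : ¬ onTop S v ∧ ¬ onBottom S v) :
    (pGraph S).dist u v ≤ 2 ↔
      (∃ w ∈ S, onBottom S w ∧ (pGraph S).Adj u w ∧ (pGraph S).Adj v w) ∨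
      (∃ w ∈ S, onTop S w ∧ (pGraph S).Adj u w ∧ (pGraph S).Adj v w) := by
  have top_of_adj (huv : (pGraph S).Adj u v) :
      ∃ t ∈ S, onTop S t ∧ (pGraph S).Adj u t ∧ (pGraph S).Adj v t :=
    let ⟨_, hq, hqu, hqv⟩ := exists_inTL_inTL_of_adj hunb.1 hvnb.1 huv
    exists_onTop_adj_adj_of_inTL hu hv hq hqu hqv
  rw [(hconn u hu v hv).dist_le_two_iff]
  constructor
  · rintro (rfl | huv | ⟨w, ⟨-, hw, huw | hwu⟩, ⟨-, -, hwv | hvw⟩⟩)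
    · obtain ⟨q, hq, hqu⟩ := exists_inTL_of_not_onTop hunb.1
      exact .inr (exists_onTop_adj_adj_of_inTL hu hu hq hqu hqu)
    · exact .inr (top_of_adj huv)
    · exact .inr (top_of_adj ⟨hu, hv, .inl (inTL_trans huw hwv)⟩)
    · exact .inl (exists_onBottom_adj_adj_of_inTL hu hv hw huw hvw)
    · exact .inr (exists_onTop_adj_adj_of_inTL hu hv hw hwu hwv)
    · exact .inr (top_of_adj ⟨hu, hv, .inr (inTL_trans hvw hwu)⟩)
  · rintro (⟨w, -, -, huw, hvw⟩ | ⟨w, -, -, huw, hvw⟩) <;> exact .inr (.inr ⟨w, huw, hvw.symm⟩)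

/-- two vertices `u, v` are at distance at most 2 iff the intervals of
their bottom-boundary neighbours intersect or the intervals of their top-boundary
neighbours intersect (since the neighbour sets on each boundary are exactly these
intervals, this means: `u` and `v` have a common neighbour on one of the boundaries). -/
theorem stmt14 (S : Finset (ℝ × ℝ)) (hS : DistinctCoords S)
    (hconn : ∀ p ∈ S, ∀ q ∈ S, (pGraph S).Reachable p q)
    (u v : ℝ × ℝ) (hu : u ∈ S) (hv : v ∈ S) (huv : u ≠ v)
    (hunb : ¬ onTop S u ∧ ¬ onBottom S u) (hvnb : ¬ onTop S v ∧ ¬ onBottom S v) :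
    (pGraph S).dist u v ≤ 2 ↔
      (∃ w ∈ S, onBottom S w ∧ (pGraph S).Adj u w ∧ (pGraph S).Adj v w) ∨
      (∃ w ∈ S, onTop S w ∧ (pGraph S).Adj u w ∧ (pGraph S).Adj v w) :=
  stmt14_general S hconn u v hu hv hunb hvnb
end

section
/- For any two non-boundary vertices u, v of a connected permutation graph with d(u,v) > 2 and u_x < v_x, there exists a shortest path from u to v whose second vertex is Blast(u) or Tlast(u) and whose penultimate vertex is Bfirst(v) or Tfirst(v). -/
/-! Two non-adjacent points of `S` are comparable in the product order, while an edge never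
joins comparable points; so every walk from the south-west to the north-east of a vertex `c`
meets the closed neighbourhood of `c`. Hence the third vertex `w` of a shortest `u`–`v` path
(with `u` south-west of `v`) lies north-east of `u`. If the second vertex lies south-east
(north-west) of `u`, the lowest (highest) point of `S` weakly beyond it in that direction is a
bottom (top) neighbour of `u`; `Blast u` (`Tlast u`) lies at least as far right, and is
therefore adjacent to `w` as well. The penultimate vertex is rerouted in the same way through
`Bfirst v` or `Tfirst v`. -/

namespace SimpleGraph

variable {V : Type*} {G : SimpleGraph V}

def IsAdjChain (G : SimpleGraph V) (q : ℕ → V) (n : ℕ) : Prop :=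
  ∀ i < n, G.Adj (q i) (q (i + 1))

namespace IsAdjChain

variable {q : ℕ → V} {n : ℕ}

theorem exists_walk (h : G.IsAdjChain q n) {i j : ℕ} (hij : i ≤ j) (hj : j ≤ n) :
    ∃ W : G.Walk (q i) (q j), W.length = j - i := by
  induction j, hij using Nat.le_induction with
  | base => exact ⟨.nil, by simp⟩
  | succ j hij ih =>
    obtain ⟨W, hW⟩ := ih (by omega)
    exact ⟨W.concat (h j (by omega)), by rw [Walk.length_concat]; omega⟩

theorem dist_le (h : G.IsAdjChain q n) {i j : ℕ} (hij : i ≤ j) (hj : j ≤ n) :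
    G.dist (q i) (q j) ≤ j - i := by
  obtain ⟨W, hW⟩ := h.exists_walk hij hj
  exact hW ▸ SimpleGraph.dist_le W

theorem dist_eq (h : G.IsAdjChain q n) (hn : G.dist (q 0) (q n) = n) {i : ℕ} (hi : i ≤ n) :
    G.dist (q 0) (q i) = i ∧ G.dist (q i) (q n) = n - i := by
  obtain ⟨W, -⟩ := h.exists_walk (Nat.zero_le i) hi
  have := W.reachable.dist_triangle_left (q n)
  have := h.dist_le (Nat.zero_le i) hi
  have := h.dist_le hi le_rfl
  omega

theorem update (h : G.IsAdjChain q n) {i : ℕ} {x : V}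
    (hprev : G.Adj (q (i - 1)) x) (hnext : G.Adj x (q (i + 1))) :
    G.IsAdjChain (Function.update q i x) n := by
  intro j hj
  rcases lt_trichotomy (j + 1) i with hlt | heq | hgt
  · rw [Function.update_of_ne (by omega), Function.update_of_ne (by omega)]
    exact h j hj
  · rw [Function.update_of_ne (by omega), heq, Function.update_self,
      show j = i - 1 by omega]
    exact hprev
  · rcases (Nat.lt_succ_iff.mp hgt).eq_or_lt with rfl | hij
    · rw [Function.update_self, Function.update_of_ne (by omega)]
      exact hnext
    · rw [Function.update_of_ne (by omega), Function.update_of_ne (by omega)]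
      exact h j hj

end IsAdjChain

theorem Reachable.exists_isAdjChain {u v : V} (h : G.Reachable u v) :
    ∃ q : ℕ → V, q 0 = u ∧ q (G.dist u v) = v ∧ G.IsAdjChain q (G.dist u v) := by
  obtain ⟨W, hW⟩ := h.exists_walk_length_eq_dist
  exact ⟨W.getVert, W.getVert_zero, hW ▸ W.getVert_length,
    fun i hi => W.adj_getVert_succ (hW ▸ hi)⟩

end SimpleGraph

open SimpleGraph

def inBL (p q : ℝ × ℝ) : Prop := p.1 < q.1 ∧ p.2 < q.2

def IsBLast (S : Finset (ℝ × ℝ)) (u b : ℝ × ℝ) : Prop :=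
  b ∈ S ∧ onBottom S b ∧ (pGraph S).Adj u b ∧
    ∀ q ∈ S, onBottom S q → (pGraph S).Adj u q → q.1 ≤ b.1

def IsTLast (S : Finset (ℝ × ℝ)) (u t : ℝ × ℝ) : Prop :=
  t ∈ S ∧ onTop S t ∧ (pGraph S).Adj u t ∧
    ∀ q ∈ S, onTop S q → (pGraph S).Adj u q → q.1 ≤ t.1

def IsBFirst (S : Finset (ℝ × ℝ)) (v b : ℝ × ℝ) : Prop :=
  b ∈ S ∧ onBottom S b ∧ (pGraph S).Adj v b ∧
    ∀ q ∈ S, onBottom S q → (pGraph S).Adj v q → b.1 ≤ q.1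

def IsTFirst (S : Finset (ℝ × ℝ)) (v t : ℝ × ℝ) : Prop :=
  t ∈ S ∧ onTop S t ∧ (pGraph S).Adj v t ∧
    ∀ q ∈ S, onTop S q → (pGraph S).Adj v q → t.1 ≤ q.1

section Geometry

variable {S : Finset (ℝ × ℝ)}

theorem inBL_or_inBL_of_not_adj (hS : DistinctCoords S) {p q : ℝ × ℝ} (hp : p ∈ S)
    (hq : q ∈ S) (hne : p ≠ q) (hnadj : ¬ (pGraph S).Adj p q) : inBL p q ∨ inBL q p := by
  obtain ⟨h1, h2⟩ := hS p hp q hq hne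
  rcases h1.lt_or_gt with hx | hx <;> rcases h2.lt_or_gt with hy | hy
  · exact .inl ⟨hx, hy⟩
  · exact absurd ⟨hp, hq, .inl ⟨hx, hy⟩⟩ hnadj
  · exact absurd ⟨hp, hq, .inr ⟨hx, hy⟩⟩ hnadj
  · exact .inr ⟨hx, hy⟩

theorem inTL_of_adj_of_onBottom {u b : ℝ × ℝ} (hu : u ∈ S) (hb : onBottom S b)
    (h : (pGraph S).Adj u b) : inTL u b :=
  h.2.2.resolve_right (hb u hu)

theorem inTL_of_adj_of_onTop {u t : ℝ × ℝ} (hu : u ∈ S) (ht : onTop S t)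
    (h : (pGraph S).Adj u t) : inTL t u :=
  h.2.2.resolve_left (ht u hu)

theorem snd_le_snd_of_not_inTL (hS : DistinctCoords S) {p q : ℝ × ℝ} (hp : p ∈ S)
    (hq : q ∈ S) (hpq : ¬ inTL p q) (h : p.1 ≤ q.1) : p.2 ≤ q.2 := by
  rcases eq_or_ne p q with rfl | hne
  · exact le_rfl
  · exact not_lt.mp fun h' => hpq ⟨h.lt_of_ne (hS p hp q hq hne).1, h'⟩

theorem exists_onBottom_below_right {w : ℝ × ℝ} (hw : w ∈ S) :
    ∃ p ∈ S, onBottom S p ∧ w.1 ≤ p.1 ∧ p.2 ≤ w.2 := by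
  classical
  obtain ⟨p, hpA, hmin⟩ := (S.filter fun p => w.1 ≤ p.1 ∧ p.2 ≤ w.2).exists_min_image
    (·.2) ⟨w, Finset.mem_filter.mpr ⟨hw, le_rfl, le_rfl⟩⟩
  obtain ⟨hp, hp1, hp2⟩ := Finset.mem_filter.mp hpA
  refine ⟨p, hp, fun q hq hpq => ?_, hp1, hp2⟩
  have := hmin q (Finset.mem_filter.mpr ⟨hq, by linarith [hpq.1], by linarith [hpq.2]⟩)
  linarith [hpq.2]

theorem exists_onTop_above_left {w : ℝ × ℝ} (hw : w ∈ S) :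
    ∃ p ∈ S, onTop S p ∧ p.1 ≤ w.1 ∧ w.2 ≤ p.2 := by
  classical
  obtain ⟨p, hpA, hmax⟩ := (S.filter fun p => p.1 ≤ w.1 ∧ w.2 ≤ p.2).exists_max_image
    (·.2) ⟨w, Finset.mem_filter.mpr ⟨hw, le_rfl, le_rfl⟩⟩
  obtain ⟨hp, hp1, hp2⟩ := Finset.mem_filter.mp hpA
  refine ⟨p, hp, fun q hq hqp => ?_, hp1, hp2⟩
  have := hmax q (Finset.mem_filter.mpr ⟨hq, by linarith [hqp.1], by linarith [hqp.2]⟩)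
  linarith [hqp.2]

theorem exists_mem_support_adj_of_inBL (hS : DistinctCoords S) {c : ℝ × ℝ} (hc : c ∈ S) :
    ∀ {a b : ℝ × ℝ} (W : (pGraph S).Walk a b), inBL a c → inBL c b →
      ∃ y ∈ W.support, y = c ∨ (pGraph S).Adj c y := by
  intro a b W
  induction W with
  | nil => exact fun hac hcb => absurd (hac.1.trans hcb.1) (lt_irrefl _)
  | @cons x y z hxy W ih =>
    intro hxc hcz
    by_cases hy : y = c ∨ (pGraph S).Adj c y
    · exact ⟨y, by simp, hy⟩
    obtain ⟨hyc, hcy⟩ := not_or.mp hy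
    rcases inBL_or_inBL_of_not_adj hS hxy.2.1 hc hyc (fun h => hcy h.symm) with hyc' | hcy'
    · obtain ⟨y', hy', h⟩ := ih hyc' hcz
      exact ⟨y', by simp [hy'], h⟩
    · exfalso
      rcases hxy.2.2 with h | h
      · linarith [h.2, hxc.2, hcy'.2]
      · linarith [h.1, hxc.1, hcy'.1]

theorem dist_le_dist_add_one_of_inBL (hS : DistinctCoords S) {a b c : ℝ × ℝ} (hc : c ∈ S)
    (hab : (pGraph S).Reachable a b) (hac : inBL a c) (hcb : inBL c b) :
    (pGraph S).dist a c ≤ (pGraph S).dist a b + 1 ∧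
      (pGraph S).dist c b ≤ (pGraph S).dist a b + 1 := by
  obtain ⟨W, hW⟩ := hab.exists_walk_length_eq_dist
  obtain ⟨y, hy, hcy⟩ := exists_mem_support_adj_of_inBL hS hc W hac hcb
  have hdist : (pGraph S).dist c y ≤ 1 := by
    rcases hcy with rfl | h
    · simp
    · exact (dist_eq_one_iff_adj.mpr h).le
  have hsplit := congrArg Walk.length (W.take_spec hy)
  rw [Walk.length_append] at hsplit
  have h₁ := ((W.takeUntil y hy).reachable.dist_triangle_left c)
  have h₂ := ((W.dropUntil y hy).reachable.dist_triangle_right c)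
  have := dist_le (W.takeUntil y hy)
  have := dist_le (W.dropUntil y hy)
  rw [dist_comm (u := y)] at h₁
  omega

theorem inBL_of_dist_eq_two_left (hS : DistinctCoords S) {u v w : ℝ × ℝ} (hu : u ∈ S)
    (hw : w ∈ S) (hwv : (pGraph S).Reachable w v) (huw : (pGraph S).dist u w = 2)
    (hlt : (pGraph S).dist w v + 1 < (pGraph S).dist u v) (huv : inBL u v) : inBL u w := by
  have hne : u ≠ w := by rintro rfl; simp at huw
  have hnadj : ¬ (pGraph S).Adj u w := fun h => by simp [dist_eq_one_iff_adj.mpr h] at huw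
  refine (inBL_or_inBL_of_not_adj hS hu hw hne hnadj).resolve_right fun hwu => ?_
  have := (dist_le_dist_add_one_of_inBL hS hu hwv hwu huv).2
  omega

theorem inBL_of_dist_eq_two_right (hS : DistinctCoords S) {u v w : ℝ × ℝ} (hv : v ∈ S)
    (hw : w ∈ S) (huw : (pGraph S).Reachable u w) (hwv : (pGraph S).dist w v = 2)
    (hlt : (pGraph S).dist u w + 1 < (pGraph S).dist u v) (huv : inBL u v) : inBL w v := by
  have hne : w ≠ v := by rintro rfl; simp at hwv
  have hnadj : ¬ (pGraph S).Adj w v := fun h => by simp [dist_eq_one_iff_adj.mpr h] at hwv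
  refine (inBL_or_inBL_of_not_adj hS hw hv hne hnadj).resolve_right fun hvw => ?_
  have := (dist_le_dist_add_one_of_inBL hS hv huw huv hvw).1
  omega

section Domination

variable {u v b t w₁ w₂ : ℝ × ℝ}

theorem adj_of_isBLast (hu : u ∈ S) (hb : IsBLast S u b) (h₁ : (pGraph S).Adj u w₁)
    (hw₁ : inTL u w₁) (h₂ : (pGraph S).Adj w₁ w₂) (hw₂ : inBL u w₂) : (pGraph S).Adj b w₂ := by
  obtain ⟨hbS, hbB, hub, hbmax⟩ := hb
  have h₁₂ : inTL w₂ w₁ := h₂.2.2.resolve_left fun h => by linarith [h.2, hw₁.2, hw₂.2]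
  obtain ⟨p, hp, hpB, hp₁, hp₂⟩ := exists_onBottom_below_right h₁.2.1
  have hup : (pGraph S).Adj u p := ⟨hu, hp, .inl ⟨by linarith [hw₁.1], by linarith [hw₁.2]⟩⟩
  have hpb := hbmax p hp hpB hup
  have hbu := inTL_of_adj_of_onBottom hu hbB hub
  exact ⟨hbS, h₂.2.1, .inr ⟨by linarith [h₁₂.1], by linarith [hbu.2, hw₂.2]⟩⟩

theorem adj_of_isTLast (hS : DistinctCoords S) (hu : u ∈ S) (ht : IsTLast S u t)
    (h₁ : (pGraph S).Adj u w₁) (hw₁ : inTL w₁ u) (h₂ : (pGraph S).Adj w₁ w₂)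
    (hw₂ : inBL u w₂) : (pGraph S).Adj t w₂ := by
  obtain ⟨htS, htT, hut, htmax⟩ := ht
  have h₁₂ : inTL w₁ w₂ := h₂.2.2.resolve_right fun h => by linarith [h.1, hw₁.1, hw₂.1]
  obtain ⟨p, hp, hpT, hp₁, hp₂⟩ := exists_onTop_above_left h₁.2.1
  have hup : (pGraph S).Adj u p := ⟨hu, hp, .inr ⟨by linarith [hw₁.1], by linarith [hw₁.2]⟩⟩
  have hpt := snd_le_snd_of_not_inTL hS hp htS (htT p hp) (htmax p hp hpT hup)
  have htu := inTL_of_adj_of_onTop hu htT hut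
  exact ⟨htS, h₂.2.1, .inl ⟨by linarith [htu.1, hw₂.1], by linarith [h₁₂.2]⟩⟩

theorem adj_of_isBFirst (hS : DistinctCoords S) (hv : v ∈ S) (hb : IsBFirst S v b)
    (h₁ : (pGraph S).Adj w₁ v) (hw₁ : inTL v w₁) (h₂ : (pGraph S).Adj w₂ w₁)
    (hw₂ : inBL w₂ v) : (pGraph S).Adj w₂ b := by
  obtain ⟨hbS, hbB, hvb, hbmin⟩ := hb
  have h₁₂ : inTL w₂ w₁ := h₂.2.2.resolve_right fun h => by linarith [h.1, hw₁.1, hw₂.1]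
  obtain ⟨p, hp, hpB, hp₁, hp₂⟩ := exists_onBottom_below_right h₁.1
  have hvp : (pGraph S).Adj v p := ⟨hv, hp, .inl ⟨by linarith [hw₁.1], by linarith [hw₁.2]⟩⟩
  have hbp := snd_le_snd_of_not_inTL hS hbS hp (hbB p hp) (hbmin p hp hpB hvp)
  have hvb' := inTL_of_adj_of_onBottom hv hbB hvb
  exact ⟨h₂.1, hbS, .inl ⟨by linarith [hvb'.1, hw₂.1], by linarith [h₁₂.2]⟩⟩

theorem adj_of_isTFirst (hv : v ∈ S) (ht : IsTFirst S v t) (h₁ : (pGraph S).Adj w₁ v)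
    (hw₁ : inTL w₁ v) (h₂ : (pGraph S).Adj w₂ w₁) (hw₂ : inBL w₂ v) : (pGraph S).Adj w₂ t := by
  obtain ⟨htS, htT, hvt, htmin⟩ := ht
  have h₁₂ : inTL w₁ w₂ := h₂.2.2.resolve_left fun h => by linarith [h.2, hw₁.2, hw₂.2]
  obtain ⟨p, hp, hpT, hp₁, hp₂⟩ := exists_onTop_above_left h₁.1
  have hvp : (pGraph S).Adj v p := ⟨hv, hp, .inr ⟨by linarith [hw₁.1], by linarith [hw₁.2]⟩⟩
  have htp := htmin p hp hpT hvp
  have htv := inTL_of_adj_of_onTop hv htT hvt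
  exact ⟨h₂.1, htS, .inr ⟨by linarith [h₁₂.1], by linarith [htv.2, hw₂.2]⟩⟩

theorem exists_adj_of_isBLast_of_isTLast (hS : DistinctCoords S) (hu : u ∈ S)
    (hb : IsBLast S u b) (ht : IsTLast S u t) (h₁ : (pGraph S).Adj u w₁)
    (h₂ : (pGraph S).Adj w₁ w₂) (hw₂ : inBL u w₂) :
    ∃ x, (x = b ∨ x = t) ∧ (pGraph S).Adj u x ∧ (pGraph S).Adj x w₂ := by
  rcases h₁.2.2 with hw₁ | hw₁
  · exact ⟨b, .inl rfl, hb.2.2.1, adj_of_isBLast hu hb h₁ hw₁ h₂ hw₂⟩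
  · exact ⟨t, .inr rfl, ht.2.2.1, adj_of_isTLast hS hu ht h₁ hw₁ h₂ hw₂⟩

theorem exists_adj_of_isBFirst_of_isTFirst (hS : DistinctCoords S) (hv : v ∈ S)
    (hb : IsBFirst S v b) (ht : IsTFirst S v t) (h₁ : (pGraph S).Adj w₁ v)
    (h₂ : (pGraph S).Adj w₂ w₁) (hw₂ : inBL w₂ v) :
    ∃ y, (y = b ∨ y = t) ∧ (pGraph S).Adj w₂ y ∧ (pGraph S).Adj y v := by
  rcases h₁.2.2 with hw₁ | hw₁
  · exact ⟨t, .inr rfl, adj_of_isTFirst hv ht h₁ hw₁ h₂ hw₂, ht.2.2.1.symm⟩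
  · exact ⟨b, .inl rfl, adj_of_isBFirst hS hv hb h₁ hw₁ h₂ hw₂, hb.2.2.1.symm⟩

end Domination

section Reroute

variable {u v b t : ℝ × ℝ} {q : ℕ → ℝ × ℝ} {d : ℕ}

theorem exists_isAdjChain_snd_eq (hS : DistinctCoords S) (hu : u ∈ S) (huv : inBL u v)
    (hd : (pGraph S).dist u v = d) (h3 : 2 < d) (hq0 : q 0 = u) (hqd : q d = v)
    (hq : (pGraph S).IsAdjChain q d) (hb : IsBLast S u b) (ht : IsTLast S u t) :
    ∃ q' : ℕ → ℝ × ℝ, q' 0 = u ∧ q' d = v ∧ (pGraph S).IsAdjChain q' d ∧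
      (q' 1 = b ∨ q' 1 = t) := by
  subst hq0 hqd
  obtain ⟨h02, h2d⟩ := hq.dist_eq hd (i := 2) (by omega)
  have hq2 : q 2 ∈ S := (hq 1 (by omega)).2.1
  have hw₂ := inBL_of_dist_eq_two_left hS hu hq2 (Reachable.of_dist_ne_zero (by omega)) h02
    (by omega) huv
  obtain ⟨x, hx, hux, hx2⟩ :=
    exists_adj_of_isBLast_of_isTLast hS hu hb ht (hq 0 (by omega)) (hq 1 (by omega)) hw₂
  refine ⟨Function.update q 1 x, Function.update_of_ne (by omega) _ _,
    Function.update_of_ne (by omega) _ _, hq.update hux hx2, ?_⟩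
  rwa [Function.update_self]

theorem exists_isAdjChain_penultimate_eq (hS : DistinctCoords S) (hv : v ∈ S)
    (huv : inBL u v) (hd : (pGraph S).dist u v = d) (h3 : 2 < d) (hq0 : q 0 = u)
    (hqd : q d = v) (hq : (pGraph S).IsAdjChain q d) (hb : IsBFirst S v b)
    (ht : IsTFirst S v t) :
    ∃ q' : ℕ → ℝ × ℝ, q' 0 = u ∧ q' d = v ∧ (pGraph S).IsAdjChain q' d ∧ q' 1 = q 1 ∧
      (q' (d - 1) = b ∨ q' (d - 1) = t) := by
  subst hq0 hqd
  obtain ⟨h0z, hzd⟩ := hq.dist_eq hd (i := d - 2) (by omega)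
  rw [show d - (d - 2) = 2 by omega] at hzd
  have hz : q (d - 2) ∈ S := (hq (d - 2) (by omega)).1
  have hzv := inBL_of_dist_eq_two_right hS hv hz (Reachable.of_dist_ne_zero (by omega)) hzd
    (by omega) huv
  have hpen : (pGraph S).Adj (q (d - 2)) (q (d - 1)) := by
    simpa [show d - 2 + 1 = d - 1 by omega] using hq (d - 2) (by omega)
  have hlast : (pGraph S).Adj (q (d - 1)) (q d) := by
    simpa [show d - 1 + 1 = d by omega] using hq (d - 1) (by omega)
  obtain ⟨y, hy, hzy, hyv⟩ := exists_adj_of_isBFirst_of_isTFirst hS hv hb ht hlast hpen hzv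
  refine ⟨Function.update q (d - 1) y, Function.update_of_ne (by omega) _ _,
    Function.update_of_ne (by omega) _ _, hq.update ?_ ?_,
    Function.update_of_ne (by omega) _ _, by rwa [Function.update_self]⟩
  · rwa [show d - 1 - 1 = d - 2 by omega]
  · rwa [show d - 1 + 1 = d by omega]

end Reroute

end Geometry

theorem stmt15_general (S : Finset (ℝ × ℝ)) (hS : DistinctCoords S)
    (hconn : ∀ p ∈ S, ∀ q ∈ S, (pGraph S).Reachable p q)
    (u v : ℝ × ℝ) (hu : u ∈ S) (hv : v ∈ S)
    (hx : u.1 < v.1)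
    (d : ℕ) (hd : (pGraph S).dist u v = d) (h3 : 2 < d)
    (blu tlu bfv tfv : ℝ × ℝ)
    (hblu : blu ∈ S ∧ onBottom S blu ∧ (pGraph S).Adj u blu ∧
      ∀ q ∈ S, onBottom S q → (pGraph S).Adj u q → q.1 ≤ blu.1)
    (htlu : tlu ∈ S ∧ onTop S tlu ∧ (pGraph S).Adj u tlu ∧
      ∀ q ∈ S, onTop S q → (pGraph S).Adj u q → q.1 ≤ tlu.1)
    (hbfv : bfv ∈ S ∧ onBottom S bfv ∧ (pGraph S).Adj v bfv ∧
      ∀ q ∈ S, onBottom S q → (pGraph S).Adj v q → bfv.1 ≤ q.1)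
    (htfv : tfv ∈ S ∧ onTop S tfv ∧ (pGraph S).Adj v tfv ∧
      ∀ q ∈ S, onTop S q → (pGraph S).Adj v q → tfv.1 ≤ q.1) :
    ∃ q : ℕ → ℝ × ℝ, q 0 = u ∧ q d = v ∧
      (∀ i < d, (pGraph S).Adj (q i) (q (i + 1))) ∧
      (q 1 = blu ∨ q 1 = tlu) ∧ (q (d - 1) = bfv ∨ q (d - 1) = tfv) := by
  have huv : inBL u v := by
    refine (inBL_or_inBL_of_not_adj hS hu hv ?_ fun h => ?_).resolve_right
      fun h => (h.1.trans hx).false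
    · rintro rfl; simp at hd; omega
    · rw [dist_eq_one_iff_adj.mpr h] at hd; omega
  obtain ⟨q, hq0, hqd, hq⟩ := (hconn u hu v hv).exists_isAdjChain
  rw [hd] at hqd hq
  obtain ⟨q', hq'0, hq'd, hq', hq'1⟩ :=
    exists_isAdjChain_snd_eq hS hu huv hd h3 hq0 hqd hq hblu htlu
  obtain ⟨q'', hq''0, hq''d, hq'', hq''1, hq''pen⟩ :=
    exists_isAdjChain_penultimate_eq hS hv huv hd h3 hq'0 hq'd hq' hbfv htfv
  exact ⟨q'', hq''0, hq''d, hq'', hq''1 ▸ hq'1, hq''pen⟩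

/-- for non-boundary vertices `u, v` with `d(u,v) > 2` and `u.1 < v.1`,
there is a shortest path from `u` to `v` whose second vertex is `Blast u` or `Tlast u`
and whose penultimate vertex is `Bfirst v` or `Tfirst v` (the extreme boundary
neighbours, characterised below by maximality/minimality in boundary order). -/
theorem stmt15 (S : Finset (ℝ × ℝ)) (hS : DistinctCoords S)
    (hconn : ∀ p ∈ S, ∀ q ∈ S, (pGraph S).Reachable p q)
    (u v : ℝ × ℝ) (hu : u ∈ S) (hv : v ∈ S)
    (hunb : ¬ onTop S u ∧ ¬ onBottom S u) (hvnb : ¬ onTop S v ∧ ¬ onBottom S v)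
    (hx : u.1 < v.1)
    (d : ℕ) (hd : (pGraph S).dist u v = d) (h3 : 2 < d)
    (blu tlu bfv tfv : ℝ × ℝ)
    (hblu : blu ∈ S ∧ onBottom S blu ∧ (pGraph S).Adj u blu ∧
      ∀ q ∈ S, onBottom S q → (pGraph S).Adj u q → q.1 ≤ blu.1)
    (htlu : tlu ∈ S ∧ onTop S tlu ∧ (pGraph S).Adj u tlu ∧
      ∀ q ∈ S, onTop S q → (pGraph S).Adj u q → q.1 ≤ tlu.1)
    (hbfv : bfv ∈ S ∧ onBottom S bfv ∧ (pGraph S).Adj v bfv ∧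
      ∀ q ∈ S, onBottom S q → (pGraph S).Adj v q → bfv.1 ≤ q.1)
    (htfv : tfv ∈ S ∧ onTop S tfv ∧ (pGraph S).Adj v tfv ∧
      ∀ q ∈ S, onTop S q → (pGraph S).Adj v q → tfv.1 ≤ q.1) :
    ∃ q : ℕ → ℝ × ℝ, q 0 = u ∧ q d = v ∧
      (∀ i < d, (pGraph S).Adj (q i) (q (i + 1))) ∧
      (q 1 = blu ∨ q 1 = tlu) ∧ (q (d - 1) = bfv ∨ q (d - 1) = tfv) :=
  stmt15_general S hS hconn u v hu hv hx d hd h3 blu tlu bfv tfv hblu htlu hbfv htfv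
end
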